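/- arXiv:2006.06824 — 9 statements merged into one kernel-verified Lean document; each statement's English description precedes it below -/
import Mathlib

section
/- Let A be a countable alphabet, φ a normalized potential on X_- = A^{ℤ_-}, and (M_n)_{n≥1} a strictly increasing sequence of natural numbers with M_1 = 1. Let x, y ∈ X_- and let μ, ν be probability measures on X = A^ℤ compatible with φ such that μ[η_{-∞}^0 ∈ ·] = δ_x and ν[η_{-∞}^0 ∈ ·] = δ_y. Then for all n ≥ 1, 0 ≤ k ≤ n−1 and all a, b, c ∈ X, the Kullback–Leibler divergence between the conditional law under μ of the block η_{M_n}^{M_{n+1}−1} given η_1^{M_n−1} = a_{M_{n−k}}^{M_n−1} b_1^{M_{n−k}−1} and the conditional law under ν of η_{M_n}^{M_{n+1}−1} given η_1^{M_n−1} = a_{M_{n−k}}^{M_n−1} c_1^{M_{n−k}−1} is at most Σ_{j=M_n}^{M_{n+1}−1} χ²_{j−M_{n−k}}(φ). -/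
open MeasureTheory ENNReal

noncomputable section

namespace GGT

variable {A : Type*}

/-- Concatenation `a·x`: the past with most recent symbol `a` followed by `x`. -/
def cons (a : A) (x : ℕ → A) : ℕ → A := fun n => Nat.casesOn n a x

/-- Word concatenation: the first `k` coordinates are taken from `z`, the remaining tail from `x`. -/
def wcat (k : ℕ) (z x : ℕ → A) : ℕ → A := fun n => if n < k then z n else x (n - k)

/-- `φ` is a normalized potential. -/
def IsNormalized (φ : (ℕ → A) → ℝ) : Prop :=
  ∀ x : ℕ → A, ∑' a : A, Real.exp (φ (cons a x)) = 1

/-- The χ²-variation of order `k` of `φ`. -/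
def chiSq (φ : (ℕ → A) → ℝ) (k : ℕ) : ℝ≥0∞ :=
  ⨆ (z : ℕ → A) (x : ℕ → A) (y : ℕ → A),
    ∑' b : A, ENNReal.ofReal
      ((Real.exp (φ (cons b (wcat k z x))) - Real.exp (φ (cons b (wcat k z y)))) ^ 2
        / Real.exp (φ (cons b (wcat k z y))))

/-- The variation of order `k` of a function `f` on the past space. -/
def varE (f : (ℕ → A) → ℝ) (k : ℕ) : ℝ≥0∞ :=
  ⨆ (z : ℕ → A) (x : ℕ → A) (y : ℕ → A),
    ∑' b : A, ENNReal.ofReal |f (cons b (wcat k z x)) - f (cons b (wcat k z y))|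

/-- Assumption (A): `χ²_k(φ) ≤ C / k^(1+δ)` for all `k ≥ 1`. -/
def AssumptionA (φ : (ℕ → A) → ℝ) (C δ : ℝ) : Prop :=
  ∀ k : ℕ, 1 ≤ k → chiSq φ k ≤ ENNReal.ofReal (C / (k : ℝ) ^ (1 + δ))

/-- The past `(ω_n, ω_{n-1}, ω_{n-2}, ...)` of a configuration `ω`. -/
def past (n : ℤ) (ω : ℤ → A) : ℕ → A := fun j => ω (n - j)

variable [MeasurableSpace A]

/-- The σ-algebra generated by the coordinates `(... , n-1, n)`. -/
def pastMS (n : ℤ) : MeasurableSpace (ℤ → A) :=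
  MeasurableSpace.comap (past n) MeasurableSpace.pi

/-- A probability measure on `A^ℤ` is compatible with `φ` if the conditional probability of
`η_{n+1} = a` given the past up to time `n` is `exp (φ (a · past))`. -/
def IsCompatible (φ : (ℕ → A) → ℝ) (μ : Measure (ℤ → A)) : Prop :=
  IsProbabilityMeasure μ ∧
  ∀ (n : ℕ) (a : A),
    (μ[Set.indicator {ω : ℤ → A | ω ((n : ℤ) + 1) = a} (fun _ => (1 : ℝ)) | pastMS (n : ℤ)])
      =ᵐ[μ] fun ω => Real.exp (φ (cons a (past (n : ℤ) ω)))

/-- Total variation distance between two measures. -/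
def dTV {Ω : Type*} [MeasurableSpace Ω] (P Q : Measure Ω) : ℝ :=
  ⨆ s : {s : Set Ω // MeasurableSet s}, |(P s.1).toReal - (Q s.1).toReal|

end GGT

open ProbabilityTheory

namespace GGT

variable {A : Type*}

/-- Kullback–Leibler divergence between two measures on a countable space. -/
def klDiv {Y : Type*} [MeasurableSpace Y] (P Q : MeasureTheory.Measure Y) : ℝ :=
  ∑' y : Y, (P {y}).toReal * Real.log ((P {y}).toReal / (Q {y}).toReal)

/-- The block of coordinates `(ω_l, ..., ω_{r-1})`. -/
def blockMap (l r : ℕ) (ω : ℤ → A) : Fin (r - l) → A := fun j => ω ((l : ℤ) + (j : ℤ))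

/-- The event `η_1^{M_n - 1} = a_{M_{n-k}}^{M_n - 1} b_1^{M_{n-k} - 1}`: the coordinates in
`[M_{n-k}, M_n - 1]` agree with `a` and the coordinates in `[1, M_{n-k} - 1]` agree with `b`
(empty constraints are dropped). -/
def condEvent (M : ℕ → ℕ) (n k : ℕ) (a b : ℤ → A) : Set (ℤ → A) :=
  {ω | (∀ j : ℕ, M (n - k) ≤ j → j < M n → ω (j : ℤ) = a (j : ℤ)) ∧
       (∀ j : ℕ, 1 ≤ j → j < M (n - k) → ω (j : ℤ) = b (j : ℤ))}

/-- The conditional law of the block `η_{M_n}^{M_{n+1}-1}` given the past event. -/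
def condBlockLaw [MeasurableSpace A] (M : ℕ → ℕ) (n k : ℕ) (a b : ℤ → A)
    (μ : MeasureTheory.Measure (ℤ → A)) :
    MeasureTheory.Measure (Fin (M (n + 1) - M n) → A) :=
  (μ[|condEvent M n k a b]).map (blockMap (M n) (M (n + 1)))

end GGT

/-!
Conditioning on the cylinder event, and using that the past at time `0` is deterministic, turns
each block law into the law of the next `L = M_{n+1} - M_n` letters of the chain started from an
explicit past; the two pasts agree on their `d = M_n - M_{n-k}` most recent letters. The chain rule
splits the divergence of two such laws into that of the first letter, which is at most its
χ²-divergence (`log t ≤ t - 1`) and hence at most `χ²_d(φ)`, plus the average divergence of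
the remaining `L - 1` letters, whose pasts now agree on `d + 1` letters. Induction on `L` gives
the sum.
-/

namespace GGT

section KullbackLeibler

variable {ι κ : Type*}

/-- A non-summable sum is `0` here, which is why the bounds below need no summability hypothesis. -/
def klSum (p q : ι → ℝ) : ℝ := ∑' i, p i * Real.log (p i / q i)

lemma klSum_comp_equiv (e : κ ≃ ι) (p q : ι → ℝ) : klSum (p ∘ e) (q ∘ e) = klSum p q :=
  e.tsum_eq fun i => p i * Real.log (p i / q i)

lemma sub_le_mul_log_div {a b : ℝ} (ha : 0 < a) (hb : 0 < b) :
    a - b ≤ a * Real.log (a / b) := by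
  have h := mul_le_mul_of_nonneg_left (Real.one_sub_inv_le_log_of_pos (div_pos ha hb)) ha.le
  rwa [inv_div, mul_sub, mul_one, mul_div_cancel₀ _ ha.ne'] at h

lemma mul_log_div_sub_add_le {a b : ℝ} (ha : 0 < a) (hb : 0 < b) :
    a * Real.log (a / b) - a + b ≤ (a - b) ^ 2 / b := by
  have h := mul_le_mul_of_nonneg_left (Real.log_le_sub_one_of_pos (div_pos ha hb)) ha.le
  have hsq : (a - b) ^ 2 / b = a * (a / b - 1) - a + b := by field_simp; ring
  linarith

lemma mul_mul_log_mul_div_mul {a b c d : ℝ} (ha : 0 < a) (hb : 0 < b) (hc : 0 < c)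
    (hd : 0 < d) :
    a * c * Real.log (a * c / (b * d))
      = c * (a * Real.log (a / b)) + a * (c * Real.log (c / d)) := by
  rw [mul_div_mul_comm, Real.log_mul (div_pos ha hb).ne' (div_pos hc hd).ne']
  ring

variable {p q : ι → ℝ}

lemma klSum_nonneg (hp : ∀ i, 0 < p i) (hq : ∀ i, 0 < q i) (hp1 : HasSum p 1)
    (hq1 : HasSum q 1) : 0 ≤ klSum p q := by
  by_cases hs : Summable fun i => p i * Real.log (p i / q i)
  · simpa [klSum] using
      hasSum_le (fun i => sub_le_mul_log_div (hp i) (hq i)) (hp1.sub hq1) hs.hasSum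
  · simp [klSum, tsum_eq_zero_of_not_summable hs]

lemma ofReal_klSum_le_tsum_chiSq (hp : ∀ i, 0 < p i) (hq : ∀ i, 0 < q i) (hp1 : HasSum p 1)
    (hq1 : HasSum q 1) :
    ENNReal.ofReal (klSum p q) ≤ ∑' i, ENNReal.ofReal ((p i - q i) ^ 2 / q i) := by
  by_cases hs : Summable fun i => p i * Real.log (p i / q i)
  · -- `∑ (p - q) = 0` turns the terms into nonnegative ones
    have hd : HasSum (fun i => p i * Real.log (p i / q i) - p i + q i) (klSum p q) := by
      simpa [klSum] using (hs.hasSum.sub hp1).add hq1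
    rw [← hd.tsum_eq, ENNReal.ofReal_tsum_of_nonneg _ hd.summable]
    · exact ENNReal.tsum_le_tsum fun i =>
        ENNReal.ofReal_le_ofReal (mul_log_div_sub_add_le (hp i) (hq i))
    · intro i
      linarith [sub_le_mul_log_div (hp i) (hq i)]
  · simp [klSum, tsum_eq_zero_of_not_summable hs]

/-- Chain rule for the Kullback–Leibler divergence of two-step laws. -/
theorem ofReal_klSum_prod_le {P Q : ι → κ → ℝ} {B : ℝ≥0∞}
    (hp : ∀ i, 0 < p i) (hq : ∀ i, 0 < q i) (hp1 : HasSum p 1) (hq1 : HasSum q 1)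
    (hP : ∀ i j, 0 < P i j) (hQ : ∀ i j, 0 < Q i j)
    (hP1 : ∀ i, HasSum (P i) 1) (hQ1 : ∀ i, HasSum (Q i) 1)
    (hB : ∀ i, ENNReal.ofReal (klSum (P i) (Q i)) ≤ B) :
    ENNReal.ofReal (klSum (fun x : ι × κ => p x.1 * P x.1 x.2) (fun x => q x.1 * Q x.1 x.2))
      ≤ ∑' i, ENNReal.ofReal ((p i - q i) ^ 2 / q i) + B := by
  set F : ι × κ → ℝ := fun x =>
    p x.1 * P x.1 x.2 * Real.log (p x.1 * P x.1 x.2 / (q x.1 * Q x.1 x.2))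
  by_cases hF : Summable F
  swap
  · simp [klSum, F, tsum_eq_zero_of_not_summable hF]
  rcases eq_or_ne B ⊤ with rfl | hB_top
  · simp
  have hsplit : ∀ i j, F (i, j) =
      P i j * (p i * Real.log (p i / q i)) + p i * (P i j * Real.log (P i j / Q i j)) :=
    fun i j => mul_mul_log_mul_div_mul (hp i) (hq i) (hP i j) (hQ i j)
  have hK_summable : ∀ i, Summable fun j => P i j * Real.log (P i j / Q i j) := fun i =>
    (((hF.prod_factor i).sub ((hP1 i).summable.mul_right (p i * Real.log (p i / q i)))).mul_left
      (p i)⁻¹).congr fun j => by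
        rw [hsplit, add_sub_cancel_left, inv_mul_cancel_left₀ (hp i).ne']
  have hK_le : ∀ i, klSum (P i) (Q i) ≤ B.toReal := fun i =>
    (ENNReal.ofReal_le_iff_le_toReal hB_top).1 (hB i)
  have hfiber : ∀ i, ∑' j, F (i, j) = p i * Real.log (p i / q i) + p i * klSum (P i) (Q i) := by
    intro i
    simp_rw [hsplit]
    rw [((hP1 i).summable.mul_right _).tsum_add ((hK_summable i).mul_left _), tsum_mul_right,
      (hP1 i).tsum_eq, one_mul, tsum_mul_left, klSum]
  have hpK : Summable fun i => p i * klSum (P i) (Q i) :=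
    Summable.of_nonneg_of_le
      (fun i => mul_nonneg (hp i).le (klSum_nonneg (hP i) (hQ i) (hP1 i) (hQ1 i)))
      (fun i => mul_le_mul_of_nonneg_left (hK_le i) (hp i).le) (hp1.summable.mul_right _)
  have hc : Summable fun i => p i * Real.log (p i / q i) :=
    (hF.prod.sub hpK).congr fun i => by rw [hfiber, add_sub_cancel_right]
  have hpK_le : ∑' i, p i * klSum (P i) (Q i) ≤ B.toReal := by
    have h := hpK.tsum_le_tsum (fun i => mul_le_mul_of_nonneg_left (hK_le i) (hp i).le)
      (hp1.summable.mul_right B.toReal)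
    rwa [tsum_mul_right, hp1.tsum_eq, one_mul] at h
  have hF_eq : ∑' x, F x = klSum p q + ∑' i, p i * klSum (P i) (Q i) := by
    rw [hF.tsum_prod, tsum_congr hfiber, hc.tsum_add hpK, klSum]
  calc ENNReal.ofReal (∑' x, F x)
      ≤ ENNReal.ofReal (klSum p q) + ENNReal.ofReal (∑' i, p i * klSum (P i) (Q i)) := by
        rw [hF_eq]; exact ENNReal.ofReal_add_le
    _ ≤ ∑' i, ENNReal.ofReal ((p i - q i) ^ 2 / q i) + B := by
        gcongr
        · exact ofReal_klSum_le_tsum_chiSq hp hq hp1 hq1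
        · exact ENNReal.ofReal_le_of_le_toReal hpK_le

end KullbackLeibler

section WordProb

variable {A : Type*} {φ : (ℕ → A) → ℝ}

/-- `wordProb φ L u w` is the probability that the chain driven by `φ`, started from the past `u`,
emits the word `w` (first letter `w 0`) in its next `L` steps. -/
def wordProb (φ : (ℕ → A) → ℝ) : (L : ℕ) → (ℕ → A) → (Fin L → A) → ℝ
  | 0, _, _ => 1
  | L + 1, u, w => Real.exp (φ (cons (w 0) u)) * wordProb φ L (cons (w 0) u) (Fin.tail w)

lemma wordProb_cons (L : ℕ) (u : ℕ → A) (s : A) (w : Fin L → A) :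
    wordProb φ (L + 1) u (Fin.cons s w)
      = Real.exp (φ (cons s u)) * wordProb φ L (cons s u) w := by
  simp [wordProb]

lemma wordProb_comp_consEquiv (L : ℕ) (u : ℕ → A) :
    wordProb φ (L + 1) u ∘ Fin.consEquiv (fun _ : Fin (L + 1) => A)
      = fun x => Real.exp (φ (cons x.1 u)) * wordProb φ L (cons x.1 u) x.2 :=
  funext fun _ => wordProb_cons ..

lemma wordProb_pos : ∀ (L : ℕ) (u : ℕ → A) (w : Fin L → A), 0 < wordProb φ L u w
  | 0, _, _ => one_pos
  | L + 1, _, _ => mul_pos (Real.exp_pos _) (wordProb_pos L _ _)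

lemma IsNormalized.hasSum (hφ : IsNormalized φ) (u : ℕ → A) :
    HasSum (fun s => Real.exp (φ (cons s u))) 1 := by
  have hs : Summable fun s => Real.exp (φ (cons s u)) := by
    by_contra h
    simpa [tsum_eq_zero_of_not_summable h] using hφ u
  simpa [hφ u] using hs.hasSum

lemma IsNormalized.hasSum_wordProb (hφ : IsNormalized φ) :
    ∀ (L : ℕ) (u : ℕ → A), HasSum (wordProb φ L u) 1
  | 0, u => by simp [wordProb]
  | L + 1, u => by
    let e := Fin.consEquiv fun _ : Fin (L + 1) => A
    set f := wordProb φ (L + 1) u ∘ e with hf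
    rw [wordProb_comp_consEquiv] at hf
    have hfiber : ∀ s, HasSum (fun w => f (s, w)) (Real.exp (φ (cons s u))) := fun s => by
      simpa only [hf, mul_one] using (hφ.hasSum_wordProb L (cons s u)).mul_left _
    have hsum : Summable f :=
      (summable_prod_of_nonneg fun x => (wordProb_pos ..).le).2
        ⟨fun s => (hfiber s).summable,
          (hφ.hasSum u).summable.congr fun s => (hfiber s).tsum_eq.symm⟩
    have h := hsum.hasSum
    rw [hsum.tsum_prod, tsum_congr fun s => (hfiber s).tsum_eq, (hφ.hasSum u).tsum_eq] at h
    exact e.hasSum_iff.1 h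

lemma tsum_ofReal_chiSq_le_chiSq {u v : ℕ → A} {d : ℕ} (huv : ∀ i < d, u i = v i) :
    ∑' s, ENNReal.ofReal ((Real.exp (φ (cons s u)) - Real.exp (φ (cons s v))) ^ 2
        / Real.exp (φ (cons s v))) ≤ chiSq φ d := by
  have hwcat : ∀ w : ℕ → A, (∀ i < d, u i = w i) → wcat d u (fun m => w (m + d)) = w := by
    intro w hw
    funext t
    by_cases ht : t < d
    · simp [wcat, ht, hw]
    · simp [wcat, ht, Nat.sub_add_cancel (not_lt.1 ht)]
  conv_lhs => rw [← hwcat u fun _ _ => rfl, ← hwcat v huv]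
  exact le_iSup_of_le u (le_iSup_of_le _ (le_iSup_of_le (fun m => v (m + d)) le_rfl))

theorem ofReal_klSum_wordProb_le (hφ : IsNormalized φ) :
    ∀ (L : ℕ) {u v : ℕ → A} {d : ℕ}, (∀ i < d, u i = v i) →
      ENNReal.ofReal (klSum (wordProb φ L u) (wordProb φ L v))
        ≤ ∑ t ∈ Finset.range L, chiSq φ (d + t)
  | 0, u, v, d, _ => by simp [klSum, wordProb]
  | L + 1, u, v, d, huv => by
    have huv' : ∀ s, ∀ i < d + 1, cons s u i = cons s v i := by
      rintro s (_ | i) hi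
      exacts [rfl, huv i (by omega)]
    have hprod := ofReal_klSum_prod_le (P := fun s => wordProb φ L (cons s u))
      (Q := fun s => wordProb φ L (cons s v)) (fun _ => Real.exp_pos _) (fun _ => Real.exp_pos _)
      (hφ.hasSum u) (hφ.hasSum v) (fun _ => wordProb_pos L _) (fun _ => wordProb_pos L _)
      (fun s => hφ.hasSum_wordProb L (cons s u)) (fun s => hφ.hasSum_wordProb L (cons s v))
      (fun s => ofReal_klSum_wordProb_le hφ L (huv' s))
    rw [← klSum_comp_equiv (Fin.consEquiv fun _ : Fin (L + 1) => A), wordProb_comp_consEquiv,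
      wordProb_comp_consEquiv]
    refine hprod.trans ?_
    calc _ ≤ chiSq φ d + ∑ t ∈ Finset.range L, chiSq φ (d + (t + 1)) :=
          add_le_add (tsum_ofReal_chiSq_le_chiSq huv)
            (Finset.sum_congr rfl fun t _ => by rw [add_right_comm, add_assoc]).le
      _ = ∑ t ∈ Finset.range (L + 1), chiSq φ (d + t) := by
          rw [Finset.sum_range_succ' _ L, add_zero, add_comm]

end WordProb

section Cylinders

variable {A : Type*} {φ : (ℕ → A) → ℝ}

/-- The past at time `i` of a configuration whose past at time `0` is `x` and whose
coordinates at times `1, …, i` are `w 1, …, w i`. -/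
def extendPast (x w : ℕ → A) (i : ℕ) : ℕ → A :=
  fun t => if t < i then w (i - t) else x (t - i)

/-- The probability of the coordinates at times `1, …, i` being `w 1, …, w i`, from the
past `x`. -/
def cylProb (φ : (ℕ → A) → ℝ) (x w : ℕ → A) : ℕ → ℝ
  | 0 => 1
  | i + 1 => cylProb φ x w i * Real.exp (φ (cons (w (i + 1)) (extendPast x w i)))

def cylinder (m : ℕ) (w : ℕ → A) : Set (ℤ → A) :=
  {ω | ∀ j : ℕ, 1 ≤ j → j ≤ m → ω j = w j}

lemma extendPast_succ (x w : ℕ → A) (i : ℕ) :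
    extendPast x w (i + 1) = cons (w (i + 1)) (extendPast x w i) := by
  funext t
  rcases t with _ | t <;> simp [extendPast, cons, Nat.add_sub_add_right]

lemma extendPast_congr (x : ℕ → A) {w w' : ℕ → A} {i : ℕ}
    (h : ∀ j, 1 ≤ j → j ≤ i → w j = w' j) : extendPast x w i = extendPast x w' i := by
  funext t
  by_cases ht : t < i
  · simp only [extendPast, if_pos ht]
    exact h (i - t) (by omega) (by omega)
  · simp [extendPast, ht]

lemma cylProb_congr (x : ℕ → A) {w w' : ℕ → A} :
    ∀ {i : ℕ}, (∀ j, 1 ≤ j → j ≤ i → w j = w' j) →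
      cylProb φ x w i = cylProb φ x w' i
  | 0, _ => rfl
  | i + 1, h => by
    simp only [cylProb]
    rw [cylProb_congr x fun j hj hji => h j hj (by omega),
      extendPast_congr x fun j hj hji => h j hj (by omega), h (i + 1) (by omega) le_rfl]

lemma cylProb_pos (x w : ℕ → A) : ∀ i, 0 < cylProb φ x w i
  | 0 => one_pos
  | i + 1 => mul_pos (cylProb_pos x w i) (Real.exp_pos _)

lemma cylProb_add (x w : ℕ → A) (i : ℕ) : ∀ L : ℕ, cylProb φ x w (i + L)
    = cylProb φ x w i * wordProb φ L (extendPast x w i) (fun t => w (i + 1 + t))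
  | 0 => by simp [wordProb]
  | L + 1 => by
    have htail : (Fin.tail fun t : Fin (L + 1) => w (i + 1 + t))
        = fun t : Fin L => w (i + 1 + 1 + t) :=
      funext fun t => by simp only [Fin.tail, Fin.val_succ, add_assoc, add_comm 1]
    rw [← add_assoc, add_right_comm, cylProb_add x w (i + 1) L, wordProb, cylProb,
      extendPast_succ, htail]
    simp only [Fin.val_zero, add_zero, mul_assoc]

lemma past_eq_extendPast {ω : ℤ → A} {x w : ℕ → A} {m : ℕ} (h0 : past 0 ω = x)
    (hω : ω ∈ cylinder m w) : past m ω = extendPast x w m := by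
  funext t
  simp only [past, extendPast]
  split_ifs with ht
  · rw [← hω (m - t) (by omega) (by omega)]
    congr 1
    omega
  · rw [← h0, past]
    congr 1
    omega

lemma condEvent_eq_cylinder {M : ℕ → ℕ} {n k : ℕ} (a b : ℤ → A) (h1 : 1 ≤ M (n - k))
    (h2 : M (n - k) ≤ M n) :
    condEvent M n k a b = cylinder (M n - 1) fun j => if j < M (n - k) then b j else a j := by
  ext ω
  simp only [condEvent, cylinder, Set.mem_ofPred_eq]
  constructor
  · rintro ⟨ha, hb⟩ j hj1 hj2
    split_ifs with hj
    exacts [hb j hj1 hj, ha j (not_lt.1 hj) (by omega)]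
  · intro h
    refine ⟨fun j hj1 hj2 => ?_, fun j hj1 hj2 => ?_⟩
    · simpa [if_neg (not_lt.2 hj1)] using h j (by omega) (by omega)
    · simpa [if_pos hj2] using h j hj1 (by omega)

end Cylinders

open ProbabilityTheory

section Measure

variable {A : Type*} [MeasurableSpace A] {φ : (ℕ → A) → ℝ}

lemma measurable_past (n : ℤ) : Measurable (past (A := A) n) :=
  measurable_pi_lambda _ fun _ => measurable_pi_apply _

lemma pastMS_le (n : ℤ) : pastMS (A := A) n ≤ MeasurableSpace.pi :=
  (measurable_past n).comap_le

lemma measurable_blockMap (l r : ℕ) : Measurable (blockMap (A := A) l r) :=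
  measurable_pi_lambda _ fun _ => measurable_pi_apply _

lemma measurable_apply_pastMS {n j : ℤ} (hj : j ≤ n) :
    Measurable[pastMS n] fun ω : ℤ → A => ω j := by
  have h : (fun ω : ℤ → A => ω j) = (fun g : ℕ → A => g (n - j).toNat) ∘ past n := by
    funext ω
    simp [past, Int.toNat_of_nonneg (sub_nonneg.2 hj)]
  rw [h]
  exact (measurable_pi_apply _).comp (comap_measurable _)

variable [DiscreteMeasurableSpace A]

lemma measurableSet_pastMS_cylinder (m : ℕ) (w : ℕ → A) :
    MeasurableSet[pastMS m] (cylinder m w) := by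
  simp only [cylinder, Set.ofPred_forall]
  exact .iInter fun j => .iInter fun _ => .iInter fun hj =>
    measurableSet_singleton (w j) |>.preimage (measurable_apply_pastMS (by omega))

lemma measurableSet_cylinder (m : ℕ) (w : ℕ → A) : MeasurableSet (cylinder m w) :=
  pastMS_le m _ (measurableSet_pastMS_cylinder m w)

variable [Countable A]

lemma ae_past_zero_eq {μ : Measure (ℤ → A)} {x : ℕ → A}
    (hμx : μ.map (past 0) = Measure.dirac x) : ∀ᵐ ω ∂μ, past 0 ω = x := by
  refine ae_of_ae_map (p := (· = x)) (measurable_past 0).aemeasurable ?_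
  rw [hμx, ae_dirac_eq]
  exact Filter.eventually_pure.2 rfl

variable {μ : Measure (ℤ → A)}

lemma IsCompatible.measureReal_inter_eq_setIntegral (hμ : IsCompatible φ μ) (m : ℕ) (a : A)
    {S : Set (ℤ → A)} (hS : MeasurableSet[pastMS m] S) :
    μ.real (S ∩ {ω | ω ((m : ℤ) + 1) = a})
      = ∫ ω in S, Real.exp (φ (cons a (past m ω))) ∂μ := by
  have := hμ.1
  set T : Set (ℤ → A) := {ω | ω ((m : ℤ) + 1) = a}
  have hT : MeasurableSet T := (measurableSet_singleton a).preimage (measurable_pi_apply _)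
  calc μ.real (S ∩ T) = ∫ ω in S, T.indicator (fun _ => (1 : ℝ)) ω ∂μ := by
        rw [setIntegral_indicator hT, setIntegral_const, smul_eq_mul, mul_one]
    _ = ∫ ω in S, μ[T.indicator (fun _ => (1 : ℝ)) | pastMS m] ω ∂μ :=
        (setIntegral_condExp (pastMS_le m) ((integrable_const 1).indicator hT) hS).symm
    _ = ∫ ω in S, Real.exp (φ (cons a (past m ω))) ∂μ :=
        setIntegral_congr_ae (pastMS_le m _ hS) <| by
          filter_upwards [hμ.2 m a] with ω hω _ using hω

theorem IsCompatible.measure_cylinder (hμ : IsCompatible φ μ) {x : ℕ → A}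
    (hμx : μ.map (past 0) = Measure.dirac x) (w : ℕ → A) :
    ∀ m, μ (cylinder m w) = ENNReal.ofReal (cylProb φ x w m) := by
  have := hμ.1
  intro m
  induction m with
  | zero =>
    have h : cylinder (A := A) 0 w = Set.univ := Set.eq_univ_of_forall fun ω j h1 h0 => by omega
    simp [h, cylProb]
  | succ m ih =>
    have hsplit : cylinder (m + 1) w = cylinder m w ∩ {ω | ω ((m : ℤ) + 1) = w (m + 1)} := by
      ext ω
      simp only [cylinder, Set.mem_inter_iff, Set.mem_ofPred_eq]
      constructor
      · intro h
        exact ⟨fun j h1 h2 => h j h1 (by omega), by exact_mod_cast h (m + 1) (by omega) le_rfl⟩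
      · rintro ⟨h, hlast⟩ j h1 h2
        rcases Nat.lt_or_ge j (m + 1) with hj | hj
        · exact h j h1 (by omega)
        · obtain rfl : j = m + 1 := by omega
          exact_mod_cast hlast
    have hconst : ∫ ω in cylinder m w, Real.exp (φ (cons (w (m + 1)) (past m ω))) ∂μ
        = μ.real (cylinder m w) * Real.exp (φ (cons (w (m + 1)) (extendPast x w m))) := by
      rw [setIntegral_congr_ae (measurableSet_cylinder m w)
        (g := fun _ => Real.exp (φ (cons (w (m + 1)) (extendPast x w m)))), setIntegral_const,
        smul_eq_mul]
      filter_upwards [ae_past_zero_eq hμx] with ω h0 hω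
      rw [past_eq_extendPast h0 hω]
    rw [hsplit, ← ofReal_measureReal, hμ.measureReal_inter_eq_setIntegral m _
      (measurableSet_pastMS_cylinder m w), hconst, measureReal_def, ih,
      ENNReal.toReal_ofReal (cylProb_pos x w m).le]
    rfl

theorem IsCompatible.map_cond_cylinder_singleton (hμ : IsCompatible φ μ) {x : ℕ → A}
    (hμx : μ.map (past 0) = Measure.dirac x) (w : ℕ → A) {l : ℕ} (hl : 1 ≤ l) (r : ℕ)
    (v : Fin (r - l) → A) :
    (μ[|cylinder (l - 1) w]).map (blockMap l r) {v}
      = ENNReal.ofReal (wordProb φ (r - l) (extendPast x w (l - 1)) v) := by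
  set w' : ℕ → A := fun j => if h : l ≤ j ∧ j - l < r - l then v ⟨j - l, h.2⟩ else w j
  have hagree : ∀ j, 1 ≤ j → j ≤ l - 1 → w j = w' j := fun j _ hj => by
    simp only [w', dif_neg (show ¬(l ≤ j ∧ j - l < r - l) by omega)]
  have hword : (fun t : Fin (r - l) => w' (l - 1 + 1 + t)) = v := funext fun t => by
    simp only [w', dif_pos (show l ≤ l - 1 + 1 + t ∧ l - 1 + 1 + t - l < r - l by omega)]
    congr; omega
  have hinter : cylinder (l - 1) w ∩ blockMap l r ⁻¹' {v} = cylinder (l - 1 + (r - l)) w' := by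
    ext ω
    simp only [cylinder, Set.mem_inter_iff, Set.mem_preimage, Set.mem_singleton_iff,
      Set.mem_ofPred_eq, funext_iff, blockMap]
    constructor
    · rintro ⟨hpre, hblock⟩ j hj1 hj2
      by_cases hj : j < l
      · rw [hpre j hj1 (by omega), hagree j hj1 (by omega)]
      · simp only [w', dif_pos (show l ≤ j ∧ j - l < r - l by omega)]
        rw [← hblock ⟨j - l, by omega⟩]
        congr 1
        push_cast [not_lt.1 hj]
        ring
    · intro h
      refine ⟨fun j hj1 hj2 => (h j hj1 (by omega)).trans (hagree j hj1 hj2).symm, fun t => ?_⟩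
      have h' := h (l - 1 + 1 + t) (by omega) (by omega)
      rw [Nat.sub_add_cancel hl] at h'
      rw [← congrFun hword t, Nat.sub_add_cancel hl]
      exact_mod_cast h'
  have hpos := cylProb_pos (φ := φ) x w (l - 1)
  rw [Measure.map_apply (measurable_blockMap l r) (measurableSet_singleton v),
    cond_apply (measurableSet_cylinder _ _), hinter, hμ.measure_cylinder hμx,
    hμ.measure_cylinder hμx, cylProb_add, hword, ← cylProb_congr x hagree,
    ← extendPast_congr x hagree, ENNReal.ofReal_mul hpos.le, ← mul_assoc,
    ENNReal.inv_mul_cancel (ENNReal.ofReal_pos.2 hpos).ne' ENNReal.ofReal_ne_top, one_mul]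

end Measure

end GGT

/-- **Lemma 1.** For compatible chains `μ, ν` with deterministic pasts `δ_x`, `δ_y`, the
Kullback–Leibler divergence between the conditional laws of the block `η_{M_n}^{M_{n+1}-1}`
given the two pasts `a_{M_{n-k}}^{M_n-1} b_1^{M_{n-k}-1}` and `a_{M_{n-k}}^{M_n-1} c_1^{M_{n-k}-1}`
is at most `Σ_{j=M_n}^{M_{n+1}-1} χ²_{j-M_{n-k}}(φ)`. -/
theorem block_KL_bound {A : Type*} [Countable A] [MeasurableSpace A]
    [DiscreteMeasurableSpace A]
    (φ : (ℕ → A) → ℝ) (hφ : GGT.IsNormalized φ)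
    (M : ℕ → ℕ) (hM1 : M 1 = 1) (hM : ∀ n : ℕ, 1 ≤ n → M n < M (n + 1))
    (x y : ℕ → A) (μ ν : MeasureTheory.Measure (ℤ → A))
    (hμ : GGT.IsCompatible φ μ) (hν : GGT.IsCompatible φ ν)
    (hμx : μ.map (GGT.past 0) = MeasureTheory.Measure.dirac x)
    (hνy : ν.map (GGT.past 0) = MeasureTheory.Measure.dirac y) :
    ∀ n k : ℕ, 1 ≤ n → k ≤ n - 1 → ∀ a b c : ℤ → A,
      ENNReal.ofReal
          (GGT.klDiv (GGT.condBlockLaw M n k a b μ) (GGT.condBlockLaw M n k a c ν))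
        ≤ ∑ j ∈ Finset.Ico (M n) (M (n + 1)), GGT.chiSq φ (j - M (n - k)) := by
  intro n k hn hk a b c
  have hmono : MonotoneOn M (Set.Ici 1) := monotoneOn_nat_Ici_of_le_succ fun m hm => (hM m hm).le
  have h1 : 1 ≤ M (n - k) :=
    hM1 ▸ hmono (Set.mem_Ici.2 le_rfl) (Set.mem_Ici.2 (by omega)) (by omega)
  have h2 : M (n - k) ≤ M n := hmono (Set.mem_Ici.2 (by omega)) (Set.mem_Ici.2 hn) (by omega)
  set u : ℕ → A := fun j => if j < M (n - k) then b j else a j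
  set u' : ℕ → A := fun j => if j < M (n - k) then c j else a j
  have hagree : ∀ i < M n - M (n - k),
      GGT.extendPast x u (M n - 1) i = GGT.extendPast y u' (M n - 1) i := fun i hi => by
    simp [GGT.extendPast, u, u', show i < M n - 1 by omega, show ¬M n - 1 - i < M (n - k) by omega]
  have hkl : GGT.klDiv (GGT.condBlockLaw M n k a b μ) (GGT.condBlockLaw M n k a c ν)
      = GGT.klSum (GGT.wordProb φ (M (n + 1) - M n) (GGT.extendPast x u (M n - 1)))
        (GGT.wordProb φ (M (n + 1) - M n) (GGT.extendPast y u' (M n - 1))) := by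
    simp only [GGT.klDiv, GGT.condBlockLaw, GGT.condEvent_eq_cylinder _ _ h1 h2,
      hμ.map_cond_cylinder_singleton hμx _ (h1.trans h2),
      hν.map_cond_cylinder_singleton hνy _ (h1.trans h2),
      ENNReal.toReal_ofReal (GGT.wordProb_pos _ _ _).le]
    rfl
  rw [hkl, Finset.sum_Ico_eq_sum_range]
  convert GGT.ofReal_klSum_wordProb_le hφ _ hagree using 3 with t
  omega
end
end

section
/- For all real α > 1 and all reals 0 < a < b, the inequality ((b+1)^α − a^α)/(b^α − a^α) ≥ ((b+1)^{α−1} − a^{α−1})/(b^{α−1} − a^{α−1}) holds. -/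
/-- Pointwise convexity of `x ↦ x ^ (-β)` on positives, via two uses of weighted AM-GM. -/
lemma rpow_neg_convex_aux {β x y w₁ w₂ : ℝ} (hβ : 0 < β) (hx : 0 < x) (hy : 0 < y)
    (hw₁ : 0 ≤ w₁) (hw₂ : 0 ≤ w₂) (hw : w₁ + w₂ = 1) :
    (w₁ * x + w₂ * y) ^ (-β) ≤ w₁ * x ^ (-β) + w₂ * y ^ (-β) := by
  have h1 : x ^ w₁ * y ^ w₂ ≤ w₁ * x + w₂ * y :=
    Real.geom_mean_le_arith_mean2_weighted hw₁ hw₂ hx.le hy.le hw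
  have hxy : 0 < x ^ w₁ * y ^ w₂ :=
    mul_pos (Real.rpow_pos_of_pos hx _) (Real.rpow_pos_of_pos hy _)
  have h2 : (w₁ * x + w₂ * y) ^ (-β) ≤ (x ^ w₁ * y ^ w₂) ^ (-β) :=
    Real.rpow_le_rpow_of_nonpos hxy h1 (by linarith)
  have h3 : (x ^ w₁ * y ^ w₂) ^ (-β) = (x ^ (-β)) ^ w₁ * (y ^ (-β)) ^ w₂ := by
    rw [Real.mul_rpow (Real.rpow_pos_of_pos hx _).le (Real.rpow_pos_of_pos hy _).le,
      ← Real.rpow_mul hx.le, ← Real.rpow_mul hy.le, mul_comm w₁, mul_comm w₂,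
      Real.rpow_mul hx.le, Real.rpow_mul hy.le]
  have h4 : (x ^ (-β)) ^ w₁ * (y ^ (-β)) ^ w₂ ≤ w₁ * x ^ (-β) + w₂ * y ^ (-β) :=
    Real.geom_mean_le_arith_mean2_weighted hw₁ hw₂
      (Real.rpow_pos_of_pos hx _).le (Real.rpow_pos_of_pos hy _).le hw
  calc (w₁ * x + w₂ * y) ^ (-β) ≤ (x ^ w₁ * y ^ w₂) ^ (-β) := h2
    _ = (x ^ (-β)) ^ w₁ * (y ^ (-β)) ^ w₂ := h3
    _ ≤ w₁ * x ^ (-β) + w₂ * y ^ (-β) := h4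

/-- **Lemma (algebraic inequality).** For `α > 1` and `0 < a < b`,
`((b+1)^α − a^α)/(b^α − a^α) ≥ ((b+1)^{α−1} − a^{α−1})/(b^{α−1} − a^{α−1})`. -/
theorem rpow_ratio_ineq (α a b : ℝ) (hα : 1 < α) (ha : 0 < a) (hab : a < b) :
    ((b + 1) ^ α - a ^ α) / (b ^ α - a ^ α)
      ≥ ((b + 1) ^ (α - 1) - a ^ (α - 1)) / (b ^ (α - 1) - a ^ (α - 1)) := by
  have hβ : 0 < α - 1 := by linarith
  have hb : 0 < b := ha.trans hab
  have hb1 : 0 < b + 1 := by linarith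
  have hd : 0 < b + 1 - a := by linarith
  set β := α - 1 with hβdef
  -- convexity inequality at b = w₁ * a + w₂ * (b+1)
  have hw₁ : (0:ℝ) ≤ 1 / (b + 1 - a) := by positivity
  have hw₂ : (0:ℝ) ≤ (b - a) / (b + 1 - a) := by
    apply div_nonneg <;> linarith
  have hw : 1 / (b + 1 - a) + (b - a) / (b + 1 - a) = 1 := by
    field_simp
    ring
  have hcomb : (1 / (b + 1 - a)) * a + ((b - a) / (b + 1 - a)) * (b + 1) = b := by
    field_simp
    ring
  have h := rpow_neg_convex_aux hβ ha hb1 hw₁ hw₂ hw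
  rw [hcomb, Real.rpow_neg ha.le, Real.rpow_neg hb.le, Real.rpow_neg hb1.le] at h
  have hA : 0 < a ^ β := Real.rpow_pos_of_pos ha β
  have hB : 0 < b ^ β := Real.rpow_pos_of_pos hb β
  have hP : 0 < (b + 1) ^ β := Real.rpow_pos_of_pos hb1 β
  -- clear denominators in the convexity inequality
  have key : a ^ β * (b + 1) ^ β * (b + 1 - a) ≤ b ^ β * (b + 1) ^ β + a ^ β * b ^ β * (b - a) := by
    have h' := mul_le_mul_of_nonneg_left h
      (le_of_lt (by positivity : (0:ℝ) < a ^ β * b ^ β * (b + 1) ^ β * (b + 1 - a)))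
    have e1 : a ^ β * (a ^ β)⁻¹ = 1 := mul_inv_cancel₀ hA.ne'
    have e2 : b ^ β * (b ^ β)⁻¹ = 1 := mul_inv_cancel₀ hB.ne'
    have e3 : (b + 1) ^ β * ((b + 1) ^ β)⁻¹ = 1 := mul_inv_cancel₀ hP.ne'
    have e4 : (b + 1 - a) * (b + 1 - a)⁻¹ = 1 := mul_inv_cancel₀ hd.ne'
    rw [div_eq_mul_inv, div_eq_mul_inv, one_mul] at h'
    have hL : a ^ β * b ^ β * (b + 1) ^ β * (b + 1 - a) * (b ^ β)⁻¹
        = a ^ β * (b + 1) ^ β * (b + 1 - a) := by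
      field_simp [hB.ne']
    have hR : a ^ β * b ^ β * (b + 1) ^ β * (b + 1 - a) *
        ((b + 1 - a)⁻¹ * (a ^ β)⁻¹ + (b - a) * (b + 1 - a)⁻¹ * ((b + 1) ^ β)⁻¹)
        = b ^ β * (b + 1) ^ β + a ^ β * b ^ β * (b - a) := by
      field_simp [hA.ne', hP.ne', hd.ne']
    rw [hL, hR] at h'
    exact h'
  -- positivity of denominators
  have D1 : 0 < b ^ α - a ^ α := sub_pos.mpr (Real.rpow_lt_rpow ha.le hab (by linarith))
  have D2 : 0 < b ^ β - a ^ β := sub_pos.mpr (Real.rpow_lt_rpow ha.le hab hβ)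
  rw [ge_iff_le, div_le_div_iff₀ D2 D1]
  have ea : a ^ α = a ^ β * a := by
    rw [hβdef, ← Real.rpow_add_one ha.ne' (α - 1), sub_add_cancel]
  have eb : b ^ α = b ^ β * b := by
    rw [hβdef, ← Real.rpow_add_one hb.ne' (α - 1), sub_add_cancel]
  have ec : (b + 1) ^ α = (b + 1) ^ β * (b + 1) := by
    rw [hβdef, ← Real.rpow_add_one hb1.ne' (α - 1), sub_add_cancel]
  rw [ea, eb, ec]
  nlinarith [key]
end

section
/- Fix δ > 0, β ≥ 1 and an integer k ≥ 3, and define Δ_k^n = (n^β − (n−k)^β − 2)^{−δ} − ((n+1)^β − (n−k)^β)^{−δ} for integers n ≥ k+1. Then n ↦ Δ_k^n is non-increasing on {k+1, k+2, ...}. -/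
/-!
Write `Δ = a^{-δ} - b^{-δ} = a^{-δ} (1 - (a/b)^δ)` with `a(t) = t^β - (t-k)^β - 2` and
`b(t) = (t+1)^β - (t-k)^β`. On `t ≥ k + 1` the base `a` is positive and increasing, and so is the
ratio `a/b`; hence both factors are non-negative and non-increasing. Monotonicity of `a/b` comes
down, with `y = t - k`, to monotonicity of `s ↦ (s^β - y^β) / (s^{β-1} - y^{β-1})` on `s > y`,
whose derivative has the sign of the tangent-line inequality `β s y^{β-1} ≤ s^β + (β-1) y^β`.
-/

open Real Set

lemma mul_rpow_sub_one_mul_sub_le_rpow_sub_rpow {β u v : ℝ} (hβ : 1 ≤ β) (hu : 0 ≤ u)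
    (huv : u ≤ v) : β * u ^ (β - 1) * (v - u) ≤ v ^ β - u ^ β := by
  rcases huv.eq_or_lt with rfl | huv
  · simp
  have hslope := (convexOn_rpow hβ).le_slope_of_hasDerivAt hu (hu.trans huv.le) huv
    (hasDerivAt_rpow_const (Or.inr hβ))
  rwa [slope_def_field, le_div_iff₀ (sub_pos.2 huv)] at hslope

lemma monotoneOn_div_of_hasDerivAt {D : Set ℝ} (hD : Convex ℝ D) {f g f' g' : ℝ → ℝ}
    (hf : ∀ t ∈ D, HasDerivAt f (f' t) t) (hg : ∀ t ∈ D, HasDerivAt g (g' t) t)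
    (hg₀ : ∀ t ∈ D, g t ≠ 0) (hfg : ∀ t ∈ interior D, f t * g' t ≤ f' t * g t) :
    MonotoneOn (fun t ↦ f t / g t) D := by
  have hdiv : ∀ t ∈ D,
      HasDerivAt (fun t ↦ f t / g t) ((f' t * g t - f t * g' t) / g t ^ 2) t :=
    fun t ht ↦ (hf t ht).div (hg t ht) (hg₀ t ht)
  exact monotoneOn_of_hasDerivWithinAt_nonneg hD
    (fun t ht ↦ (hdiv t ht).continuousAt.continuousWithinAt)
    (fun t ht ↦ (hdiv t (interior_subset ht)).hasDerivWithinAt)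
    fun t ht ↦ div_nonneg (sub_nonneg.2 (hfg t ht)) (sq_nonneg _)

lemma monotoneOn_rpow_sub_div_rpow_sub {β y : ℝ} (hβ : 1 < β) (hy : 0 ≤ y) :
    MonotoneOn (fun s ↦ (s ^ β - y ^ β) / (s ^ (β - 1) - y ^ (β - 1))) (Ioi y) := by
  refine monotoneOn_div_of_hasDerivAt (convex_Ioi y)
    (f' := fun s ↦ β * s ^ (β - 1)) (g' := fun s ↦ (β - 1) * s ^ (β - 1 - 1))
    (fun s _ ↦ (hasDerivAt_rpow_const (Or.inr hβ.le)).sub_const _)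
    (fun s hs ↦ (hasDerivAt_rpow_const (Or.inl (hy.trans_lt hs).ne')).sub_const _)
    (fun s hs ↦ (sub_pos.2 (rpow_lt_rpow hy hs (by linarith))).ne') fun s hs ↦ ?_
  rw [interior_Ioi] at hs
  have hs₀ : 0 < s := hy.trans_lt hs
  have htangent : β * s * y ^ (β - 1) ≤ s ^ β + (β - 1) * y ^ β := by
    have hyy : y ^ β = y * y ^ (β - 1) := by
      rw [← rpow_one_add' hy (by linarith)]
      ring_nf
    linear_combination mul_rpow_sub_one_mul_sub_le_rpow_sub_rpow hβ.le hy hs.le - β * hyy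
  set p := s ^ (β - 1 - 1)
  have hp : 0 < p := rpow_pos_of_pos hs₀ _
  have h₁ : s ^ (β - 1) = p * s := by
    rw [← rpow_add_one hs₀.ne']
    ring_nf
  have h₂ : s ^ β = p * s * s := by
    rw [← h₁, ← rpow_add_one hs₀.ne']
    ring_nf
  rw [h₂] at htangent
  rw [h₁, h₂]
  linear_combination mul_le_mul_of_nonneg_left htangent hp.le

section Bases

variable (β K : ℝ)

noncomputable def lowerBase (t : ℝ) : ℝ := t ^ β - (t - K) ^ β - 2

noncomputable def upperBase (t : ℝ) : ℝ := (t + 1) ^ β - (t - K) ^ β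

variable {β K}

lemma hasDerivAt_lowerBase (hβ : 1 ≤ β) (t : ℝ) :
    HasDerivAt (lowerBase β K) (β * (t ^ (β - 1) - (t - K) ^ (β - 1))) t :=
  ((((hasDerivAt_id' t).rpow_const (Or.inr hβ)).sub
    (((hasDerivAt_id' t).sub_const K).rpow_const (Or.inr hβ))).sub_const 2).congr_deriv (by ring)

lemma hasDerivAt_upperBase (hβ : 1 ≤ β) (t : ℝ) :
    HasDerivAt (upperBase β K) (β * ((t + 1) ^ (β - 1) - (t - K) ^ (β - 1))) t :=
  ((((hasDerivAt_id' t).add_const 1).rpow_const (Or.inr hβ)).sub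
    (((hasDerivAt_id' t).sub_const K).rpow_const (Or.inr hβ))).congr_deriv (by ring)

lemma monotoneOn_lowerBase (hβ : 1 ≤ β) (hK : 0 ≤ K) : MonotoneOn (lowerBase β K) (Ici K) :=
  monotoneOn_of_hasDerivWithinAt_nonneg (convex_Ici K)
    (fun t _ ↦ (hasDerivAt_lowerBase hβ t).continuousAt.continuousWithinAt)
    (fun t _ ↦ (hasDerivAt_lowerBase hβ t).hasDerivWithinAt) fun t ht ↦ by
      rw [interior_Ici, mem_Ioi] at ht
      have : (t - K) ^ (β - 1) ≤ t ^ (β - 1) :=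
        rpow_le_rpow (by linarith) (by linarith) (by linarith)
      nlinarith

lemma lowerBase_pos (hβ : 1 ≤ β) (hK : 2 < K) {t : ℝ} (ht : K + 1 ≤ t) :
    0 < lowerBase β K t := by
  have hK₁ : K + 1 ≤ (K + 1) ^ β := self_le_rpow_of_one_le (by linarith) hβ
  have hbase : lowerBase β K (K + 1) = (K + 1) ^ β - 3 := by
    simp only [lowerBase, add_sub_cancel_left, one_rpow]
    ring
  have hmono := monotoneOn_lowerBase (K := K) hβ (by linarith)
    (mem_Ici.2 (by linarith : K ≤ K + 1)) (mem_Ici.2 (by linarith : K ≤ t)) ht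
  linarith

lemma lowerBase_le_upperBase (hβ : 0 ≤ β) {t : ℝ} (ht : 0 ≤ t) :
    lowerBase β K t ≤ upperBase β K t := by
  have : t ^ β ≤ (t + 1) ^ β := rpow_le_rpow ht (by linarith) hβ
  unfold lowerBase upperBase
  linarith

lemma upperBase_pos (hβ : 0 < β) (hK : -1 < K) {t : ℝ} (ht : K ≤ t) : 0 < upperBase β K t :=
  sub_pos.2 (rpow_lt_rpow (by linarith) (by linarith) hβ)

lemma lowerBase_mul_deriv_upperBase_le (hβ : 1 ≤ β) (hK : 0 < K) {t : ℝ} (ht : K < t) :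
    lowerBase β K t * (β * ((t + 1) ^ (β - 1) - (t - K) ^ (β - 1))) ≤
      β * (t ^ (β - 1) - (t - K) ^ (β - 1)) * upperBase β K t := by
  rcases hβ.eq_or_lt with rfl | hβ
  · simp
  have hy : 0 < t - K := sub_pos.2 ht
  have hden : ∀ s, t - K < s → 0 < s ^ (β - 1) - (t - K) ^ (β - 1) := fun s hs ↦
    sub_pos.2 (rpow_lt_rpow hy.le hs (by linarith))
  have hratio := monotoneOn_rpow_sub_div_rpow_sub hβ hy.le
    (show t - K < t by linarith) (show t - K < t + 1 by linarith) (by linarith)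
  rw [div_le_div_iff₀ (hden t (by linarith)) (hden (t + 1) (by linarith))] at hratio
  calc lowerBase β K t * (β * ((t + 1) ^ (β - 1) - (t - K) ^ (β - 1)))
      ≤ (t ^ β - (t - K) ^ β) * (β * ((t + 1) ^ (β - 1) - (t - K) ^ (β - 1))) :=
        mul_le_mul_of_nonneg_right (by unfold lowerBase; linarith)
          (mul_nonneg (by linarith) (hden (t + 1) (by linarith)).le)
    _ = β * ((t ^ β - (t - K) ^ β) * ((t + 1) ^ (β - 1) - (t - K) ^ (β - 1))) := by ring
    _ ≤ β * (((t + 1) ^ β - (t - K) ^ β) * (t ^ (β - 1) - (t - K) ^ (β - 1))) := by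
        gcongr
    _ = β * (t ^ (β - 1) - (t - K) ^ (β - 1)) * upperBase β K t := by unfold upperBase; ring

lemma monotoneOn_lowerBase_div_upperBase (hβ : 1 ≤ β) (hK : 0 < K) :
    MonotoneOn (fun t ↦ lowerBase β K t / upperBase β K t) (Ici K) :=
  monotoneOn_div_of_hasDerivAt (convex_Ici K) (fun t _ ↦ hasDerivAt_lowerBase hβ t)
    (fun t _ ↦ hasDerivAt_upperBase hβ t)
    (fun t ht ↦ (upperBase_pos (by linarith) (by linarith) ht).ne') fun t ht ↦ by
      rw [interior_Ici] at ht
      exact lowerBase_mul_deriv_upperBase_le hβ hK ht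

end Bases

lemma rpow_neg_sub_rpow_neg_le {a₁ a₂ b₁ b₂ δ : ℝ} (hδ : 0 ≤ δ) (ha₁ : 0 < a₁) (hb₁ : 0 < b₁)
    (ha : a₁ ≤ a₂) (hab₂ : a₂ ≤ b₂) (hratio : a₁ / b₁ ≤ a₂ / b₂) :
    a₂ ^ (-δ) - b₂ ^ (-δ) ≤ a₁ ^ (-δ) - b₁ ^ (-δ) := by
  have ha₂ : 0 < a₂ := ha₁.trans_le ha
  have hb₂ : 0 < b₂ := ha₂.trans_le hab₂
  have hfactor : ∀ x y : ℝ, 0 < x → 0 < y → x ^ (-δ) - y ^ (-δ) = x ^ (-δ) * (1 - (x / y) ^ δ) :=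
    fun x y hx hy ↦ by
      rw [div_rpow hx.le hy.le, rpow_neg hx.le, rpow_neg hy.le]
      field_simp [(rpow_pos_of_pos hx δ).ne']
  rw [hfactor a₁ b₁ ha₁ hb₁, hfactor a₂ b₂ ha₂ hb₂]
  have hpow : a₂ ^ (-δ) ≤ a₁ ^ (-δ) := rpow_le_rpow_of_nonpos ha₁ ha (neg_nonpos.2 hδ)
  have hratio_pow : (a₁ / b₁) ^ δ ≤ (a₂ / b₂) ^ δ := rpow_le_rpow (by positivity) hratio hδ
  have hratio_le_one : (a₂ / b₂) ^ δ ≤ 1 := rpow_le_one (by positivity) ((div_le_one hb₂).2 hab₂) hδ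
  exact mul_le_mul hpow (by linarith) (by linarith) (rpow_nonneg ha₁.le _)

/-- **Lemma (monotonicity of `Δ_k^n`).** For `δ > 0`, `β ≥ 1` and an integer `k ≥ 3`, the
quantity `Δ_k^n = (n^β − (n−k)^β − 2)^{−δ} − ((n+1)^β − (n−k)^β)^{−δ}` is a non-increasing
function of the integer `n ≥ k + 1`. -/
theorem Delta_antitone (δ β : ℝ) (hδ : 0 < δ) (hβ : 1 ≤ β) (k : ℕ) (hk : 3 ≤ k)
    (Δ : ℕ → ℝ)
    (hΔ : ∀ n : ℕ, Δ n =
      ((n : ℝ) ^ β - ((n : ℝ) - (k : ℝ)) ^ β - 2) ^ (-δ)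
        - (((n : ℝ) + 1) ^ β - ((n : ℝ) - (k : ℝ)) ^ β) ^ (-δ)) :
    ∀ m n : ℕ, k + 1 ≤ m → m ≤ n → Δ n ≤ Δ m := by
  intro m n hm hmn
  have hK : (2 : ℝ) < k := by exact_mod_cast (by omega : 2 < k)
  have hmK : (k : ℝ) + 1 ≤ m := by exact_mod_cast hm
  have hmn' : (m : ℝ) ≤ n := by exact_mod_cast hmn
  have hm' : (m : ℝ) ∈ Ici (k : ℝ) := mem_Ici.2 (by linarith)
  have hn' : (n : ℝ) ∈ Ici (k : ℝ) := mem_Ici.2 (by linarith)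
  rw [hΔ, hΔ]
  exact rpow_neg_sub_rpow_neg_le hδ.le (lowerBase_pos hβ hK hmK)
    (upperBase_pos (by linarith) (by linarith) hm')
    (monotoneOn_lowerBase hβ (by linarith) hm' hn' hmn')
    (lowerBase_le_upperBase (by linarith) (by linarith))
    (monotoneOn_lowerBase_div_upperBase hβ (by linarith) hm' hn' hmn')
end

section
/- Fix δ > 0, β ≥ 1 and an integer k ≥ 3, and define Δ_k^n = (n^β − (n−k)^β − 2)^{−δ} − ((n+1)^β − (n−k)^β)^{−δ}. Then Δ_k^{k+1} ≤ 6 · 2^β · 4^δ · β / k^{δβ+1}. -/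
/-!
Write `A = (k+1)^β − 3` and `B = (k+2)^β − 1`, so that `Δ_k^{k+1} = A^{−δ} − B^{−δ}`.
Superadditivity of `x ↦ x^β` gives `A ≥ k^β − 2`. For `k ≥ 4` this is at least `k^β / 2`, and
the tangent-line inequality for `x ↦ x^{−δ}` bounds `Δ` by `δ A^{−δ−1} (B − A)`, where
`B − A ≤ 3β (2k)^{β−1}` by the tangent-line inequality for `x ↦ x^β`; the constant then comes from
`δ 2^δ ≤ 2 · 4^δ`. For `k = 3` the crude bound `Δ ≤ A^{−δ} ≤ (k^β/3)^{−δ}` already suffices.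
-/

open Real

/-- The paper's `Δ_k^n`, with real `k` and `n`. -/
noncomputable def Delta (δ β k n : ℝ) : ℝ :=
  (n ^ β - (n - k) ^ β - 2) ^ (-δ) - ((n + 1) ^ β - (n - k) ^ β) ^ (-δ)

lemma Delta_self_add_one (δ β k : ℝ) :
    Delta δ β k (k + 1) = ((k + 1) ^ β - 3) ^ (-δ) - ((k + 2) ^ β - 1) ^ (-δ) := by
  rw [Delta, add_sub_cancel_left, one_rpow, add_assoc, one_add_one_eq_two]
  ring_nf

lemma one_add_mul_sub_one_le_rpow {x p : ℝ} (hx : 0 < x) (hp : p ≤ 0 ∨ 1 ≤ p) :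
    1 + p * (x - 1) ≤ x ^ p := by
  rcases hp with hp | hp
  · calc 1 + p * (x - 1) ≤ log x * p + 1 := by nlinarith [log_le_sub_one_of_pos hx]
      _ ≤ x ^ p := by rw [rpow_def_of_pos hx]; exact add_one_le_exp _
  · simpa using one_add_mul_self_le_rpow_one_add (s := x - 1) (by linarith) hp

lemma rpow_add_mul_rpow_sub_one_mul_sub_le {a b p : ℝ} (ha : 0 < a) (hb : 0 < b)
    (hp : p ≤ 0 ∨ 1 ≤ p) : a ^ p + p * a ^ (p - 1) * (b - a) ≤ b ^ p := by
  calc a ^ p + p * a ^ (p - 1) * (b - a) = a ^ p * (1 + p * (b / a - 1)) := by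
        rw [rpow_sub_one ha.ne']; field_simp
    _ ≤ a ^ p * (b / a) ^ p := by gcongr; exact one_add_mul_sub_one_le_rpow (by positivity) hp
    _ = b ^ p := by rw [← mul_rpow ha.le (by positivity), mul_div_cancel₀ _ ha.ne']

lemma rpow_neg_sub_rpow_neg_le_s10 {a b δ : ℝ} (ha : 0 < a) (hab : a ≤ b) (hδ : 0 ≤ δ) :
    a ^ (-δ) - b ^ (-δ) ≤ δ * a ^ (-δ - 1) * (b - a) := by
  have := rpow_add_mul_rpow_sub_one_mul_sub_le ha (ha.trans_le hab) (.inl (neg_nonpos.2 hδ))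
  linarith

lemma rpow_add_one_sub_rpow_le {x β : ℝ} (hx : 0 < x) (hβ : 1 ≤ β) :
    (x + 1) ^ β - x ^ β ≤ β * (x + 1) ^ (β - 1) := by
  have := rpow_add_mul_rpow_sub_one_mul_sub_le (by linarith : 0 < x + 1) hx (.inr hβ)
  linarith

lemma rpow_add_one_le_add_one_rpow {x β : ℝ} (hx : 0 ≤ x) (hβ : 1 ≤ β) :
    x ^ β + 1 ≤ (x + 1) ^ β := by
  simpa using add_rpow_le_rpow_add hx zero_le_one hβ

lemma rpow_add_two_sub_rpow_add_one_add_two_le {x β : ℝ} (hx : 2 ≤ x) (hβ : 1 ≤ β) :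
    (x + 2) ^ β - (x + 1) ^ β + 2 ≤ 3 * β * (2 * x) ^ (β - 1) := by
  have hstep := rpow_add_one_sub_rpow_le (x := x + 1) (by linarith) hβ
  rw [add_assoc, one_add_one_eq_two] at hstep
  have hmono : (x + 2) ^ (β - 1) ≤ (2 * x) ^ (β - 1) := by
    gcongr
    linarith
  have hone : 1 ≤ (2 * x) ^ (β - 1) := one_le_rpow (by linarith) (by linarith)
  nlinarith

lemma le_two_mul_two_rpow (δ : ℝ) : δ ≤ 2 * 2 ^ δ := by
  have hexp : 1 + δ * log 2 ≤ 2 ^ δ := by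
    rw [rpow_def_of_pos two_pos]; linarith [add_one_le_exp (log 2 * δ)]
  rcases le_or_gt 0 δ with hδ | hδ
  · nlinarith [log_two_gt_d9]
  · linarith [rpow_pos_of_pos two_pos δ]

lemma Delta_self_add_one_le_rpow_div_rpow {δ β k : ℝ} (hδ : 0 ≤ δ) (hβ : 1 ≤ β) (hk : 3 ≤ k) :
    Delta δ β k (k + 1) ≤ 3 ^ δ / k ^ (δ * β) := by
  have hkβ : 3 ≤ k ^ β := hk.trans (self_le_rpow_of_one_le (by linarith) hβ)
  have hA : k ^ β / 3 ≤ (k + 1) ^ β - 3 := by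
    linarith [rpow_add_one_le_add_one_rpow (by linarith : 0 ≤ k) hβ]
  have hB : 0 ≤ ((k + 2) ^ β - 1) ^ (-δ) :=
    rpow_nonneg (by linarith [one_le_rpow (by linarith : 1 ≤ k + 2) (by linarith : 0 ≤ β)]) _
  rw [Delta_self_add_one]
  calc ((k + 1) ^ β - 3) ^ (-δ) - ((k + 2) ^ β - 1) ^ (-δ) ≤ (k ^ β / 3) ^ (-δ) := by
        linarith [rpow_le_rpow_of_nonpos (by positivity) hA (neg_nonpos.2 hδ)]
    _ = 3 ^ δ / k ^ (δ * β) := by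
        rw [rpow_neg (by positivity), div_rpow (by positivity) (by norm_num), inv_div,
          ← rpow_mul (by linarith), mul_comm β]

lemma Delta_self_add_one_le_of_four_le {δ β k : ℝ} (hδ : 0 ≤ δ) (hβ : 1 ≤ β) (hk : 4 ≤ k) :
    Delta δ β k (k + 1) ≤ 6 * 2 ^ β * 4 ^ δ * β / k ^ (δ * β + 1) := by
  rw [Delta_self_add_one]
  set A := (k + 1) ^ β - 3
  set B := (k + 2) ^ β - 1
  have hkβ : 4 ≤ k ^ β := hk.trans (self_le_rpow_of_one_le (by linarith) hβ)
  have hA : k ^ β / 2 ≤ A := by linarith [rpow_add_one_le_add_one_rpow (by linarith : 0 ≤ k) hβ]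
  have hAB : A ≤ B := by
    have : (k + 1) ^ β ≤ (k + 2) ^ β := by gcongr; linarith
    linarith
  have hApow : A ^ (-δ - 1) ≤ (k ^ β / 2) ^ (-δ - 1) :=
    rpow_le_rpow_of_nonpos (by positivity) hA (by linarith)
  have hgap : B - A ≤ 3 * β * (2 * k) ^ (β - 1) := by
    linarith [rpow_add_two_sub_rpow_add_one_add_two_le (by linarith : 2 ≤ k) hβ]
  calc A ^ (-δ) - B ^ (-δ) ≤ δ * A ^ (-δ - 1) * (B - A) :=
        rpow_neg_sub_rpow_neg_le_s10 (by linarith) hAB hδ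
    _ ≤ δ * (k ^ β / 2) ^ (-δ - 1) * (3 * β * (2 * k) ^ (β - 1)) := by gcongr
    _ = 3 * β * δ * (2 ^ (β - 1) / 2 ^ (-δ - 1)) * (k ^ (β * (-δ - 1)) * k ^ (β - 1)) := by
        rw [div_rpow (by positivity) (by norm_num), ← rpow_mul (by linarith),
          mul_rpow (by norm_num) (by linarith)]
        ring
    _ = 3 * β * (δ * 2 ^ δ) * 2 ^ β / k ^ (δ * β + 1) := by
        rw [← rpow_sub two_pos, ← rpow_add (by linarith), div_eq_mul_inv, ← rpow_neg (by linarith),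
          show β - 1 - (-δ - 1) = δ + β by ring, show β * (-δ - 1) + (β - 1) = -(δ * β + 1) by ring,
          rpow_add two_pos]
        ring
    _ ≤ 3 * β * (2 * 2 ^ δ * 2 ^ δ) * 2 ^ β / k ^ (δ * β + 1) := by
        gcongr
        exact le_two_mul_two_rpow δ
    _ = 6 * 2 ^ β * 4 ^ δ * β / k ^ (δ * β + 1) := by
        rw [show (4 : ℝ) = 2 * 2 by norm_num, mul_rpow (by norm_num) (by norm_num)]
        ring

/-- **Lemma (bound on `Δ_k^{k+1}`).** For `δ > 0`, `β ≥ 1` and an integer `k ≥ 3`,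
`Δ_k^{k+1} = ((k+1)^β − 3)^{−δ} − ((k+2)^β − 1)^{−δ} ≤ 6 · 2^β · 4^δ · β / k^{δβ+1}`. -/
theorem Delta_initial_bound (δ β : ℝ) (hδ : 0 < δ) (hβ : 1 ≤ β) (k : ℕ) (hk : 3 ≤ k) :
    (((k : ℝ) + 1) ^ β - 3) ^ (-δ) - (((k : ℝ) + 2) ^ β - 1) ^ (-δ)
      ≤ 6 * 2 ^ β * 4 ^ δ * β / (k : ℝ) ^ (δ * β + 1) := by
  rw [← Delta_self_add_one]
  rcases hk.eq_or_lt with rfl | hk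
  · have h34 : (3 : ℝ) ^ δ ≤ 4 ^ δ := by gcongr; norm_num
    have h2β : 1 ≤ (2 : ℝ) ^ β * β :=
      one_le_mul_of_one_le_of_one_le (one_le_rpow one_le_two (by linarith)) hβ
    calc _ ≤ (3 : ℝ) ^ δ / 3 ^ (δ * β) := by
          exact_mod_cast Delta_self_add_one_le_rpow_div_rpow hδ.le hβ le_rfl
      _ ≤ 6 * 2 ^ β * 4 ^ δ * β / 3 ^ (δ * β + 1) := by
          rw [rpow_add_one three_ne_zero, mul_comm _ (3 : ℝ), ← div_div]
          gcongr
          rw [le_div_iff₀ three_pos]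
          nlinarith [rpow_pos_of_pos (by norm_num : (0 : ℝ) < 4) δ]
      _ = _ := by norm_num
  · exact Delta_self_add_one_le_of_four_le hδ.le hβ (by exact_mod_cast hk)
end

section
/- Let (f_k)_{k≥1} be a sequence of positive real numbers with Σ_{k=1}^∞ f_k < 1, and let (u_n)_{n≥0} satisfy u_0 = 1 and the renewal equation u_n = Σ_{k=1}^n f_k u_{n−k} for all n ≥ 1. If there exist constants c₁ > 0 and α > 0 such that f_n ≤ c₁/n^{1+α} for all n ≥ 1, then there exists a constant c₂ > 0 (depending on the sequence (f_k)) such that u_n ≤ c₂/n^{1+α} for all n ≥ 1. -/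
/-!
Weight `u n` by `n ^ p` with `p = 1 + α` and split the renewal sum at `k = n / 2`. On the near
half, `u (n - k) ≤ C / (n - k) ^ p = C (n / (n - k)) ^ p / n ^ p`, and by dominated convergence
`∑_{k ≤ n/2} f k (n / (n - k)) ^ p → ∑ f k < 1`, so eventually this weighted mass is at most some
`r < 1`. On the far half, `f k ≤ c₁ 2 ^ p / n ^ p`, while `∑ u j ≤ (1 - ∑ f k)⁻¹`. Hence
`n ^ p u n ≤ r C + B` for a constant `B`, and strong induction closes once `C ≥ B / (1 - r)`.
-/

open Finset Filter Topology

lemma sum_range_add_one_eq_sum_Icc (g : ℕ → ℝ) (n : ℕ) :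
    ∑ k ∈ range n, g (k + 1) = ∑ k ∈ Icc 1 n, g k := by
  rw [range_eq_Ico, sum_Ico_add', ← Ico_add_one_right_eq_Icc, zero_add]

lemma natCast_div_natCast_sub_le_two {n k : ℕ} (hk : k ≤ n / 2) :
    (n : ℝ) / (n - k : ℕ) ≤ 2 :=
  div_le_of_le_mul₀ (Nat.cast_nonneg _) zero_le_two
    (by exact_mod_cast (by omega : n ≤ 2 * (n - k)))

lemma div_rpow_eq_mul_div_rpow {x y : ℝ} (hx : 0 < x) (hy : 0 < y) (c p : ℝ) :
    c / y ^ p = c * (x / y) ^ p / x ^ p := by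
  rw [Real.div_rpow hx.le hy.le]
  field_simp

lemma sum_Icc_sum_Icc_sub_le {F : ℕ → ℕ → ℝ} (hF : ∀ k, 1 ≤ k → ∀ j, 0 ≤ F k j) (M : ℕ) :
    ∑ n ∈ Icc 1 M, ∑ k ∈ Icc 1 n, F k (n - k) ≤ ∑ k ∈ Icc 1 M, ∑ j ∈ range M, F k j := by
  rw [sum_comm' (t' := Icc 1 M) (s' := fun k => Icc k M)
    (by intro n k; simp only [mem_Icc]; omega)]
  refine sum_le_sum fun k hk => ?_
  rw [← Ico_add_one_right_eq_Icc, sum_Ico_eq_sum_range]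
  simp only [add_tsub_cancel_left]
  rw [mem_Icc] at hk
  exact sum_le_sum_of_subset_of_nonneg (range_subset_range.2 (by omega)) fun j _ _ => hF k hk.1 j

theorem tendsto_sum_Icc_half_mul_rpow {f : ℕ → ℝ} (hf : Summable fun k => f (k + 1)) {p : ℝ}
    (hp : 0 ≤ p) :
    Tendsto (fun n : ℕ => ∑ k ∈ Icc 1 (n / 2), f k * ((n : ℝ) / (n - k : ℕ)) ^ p) atTop
      (𝓝 (∑' k, f (k + 1))) := by
  set F : ℕ → ℕ → ℝ := fun n k =>
    if k + 1 ≤ n / 2 then f (k + 1) * ((n : ℝ) / (n - (k + 1) : ℕ)) ^ p else 0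
  have hsum_F (n : ℕ) :
      ∑' k, F n k = ∑ k ∈ Icc 1 (n / 2), f k * ((n : ℝ) / (n - k : ℕ)) ^ p := by
    rw [tsum_eq_sum (s := range (n / 2)) fun k hk => if_neg (by simpa using hk),
      ← sum_range_add_one_eq_sum_Icc]
    exact sum_congr rfl fun k hk => if_pos (by simpa using hk)
  have hlim (k : ℕ) : Tendsto (F · k) atTop (𝓝 (f (k + 1))) := by
    have hratio : Tendsto (fun n : ℕ => ((n : ℝ) / (n + -(k + 1 : ℝ))) ^ p) atTop (𝓝 1) := by
      simpa using (tendsto_natCast_div_add_atTop (-(k + 1 : ℝ))).rpow_const (Or.inr hp)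
    refine (by simpa using hratio.const_mul (f (k + 1)) : Tendsto _ _ _).congr' ?_
    filter_upwards [eventually_ge_atTop (2 * (k + 1))] with n hn
    have hk : k + 1 ≤ n / 2 := by omega
    simp only [F, if_pos hk, Nat.cast_sub (by omega : k + 1 ≤ n)]
    push_cast
    ring_nf
  have hbound (n k : ℕ) : ‖F n k‖ ≤ |f (k + 1)| * 2 ^ p := by
    simp only [F]
    split_ifs with hk
    · rw [Real.norm_eq_abs, abs_mul, abs_of_nonneg (Real.rpow_nonneg (by positivity) p)]
      gcongr
      exact natCast_div_natCast_sub_le_two hk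
    · simp only [norm_zero]; positivity
  simpa only [hsum_F] using
    tendsto_tsum_of_dominated_convergence (hf.abs.mul_right _) hlim (Eventually.of_forall hbound)

theorem sum_Icc_half_mul_le {f u : ℕ → ℝ} {p C r : ℝ} (hf : ∀ k, 1 ≤ k → 0 ≤ f k) (hC : 0 ≤ C)
    {n : ℕ} (hn : 1 ≤ n) (ih : ∀ j, 1 ≤ j → j < n → u j ≤ C / (j : ℝ) ^ p)
    (hr : ∑ k ∈ Icc 1 (n / 2), f k * ((n : ℝ) / (n - k : ℕ)) ^ p ≤ r) :
    ∑ k ∈ Icc 1 (n / 2), f k * u (n - k) ≤ C * r / (n : ℝ) ^ p :=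
  calc ∑ k ∈ Icc 1 (n / 2), f k * u (n - k)
      ≤ ∑ k ∈ Icc 1 (n / 2), f k * (C * ((n : ℝ) / (n - k : ℕ)) ^ p / (n : ℝ) ^ p) := by
        refine sum_le_sum fun k hk => ?_
        rw [mem_Icc] at hk
        have hnk : 1 ≤ n - k := by omega
        rw [← div_rpow_eq_mul_div_rpow (by exact_mod_cast hn) (by exact_mod_cast hnk)]
        exact mul_le_mul_of_nonneg_left (ih _ hnk (by omega)) (hf k hk.1)
    _ = C * (∑ k ∈ Icc 1 (n / 2), f k * ((n : ℝ) / (n - k : ℕ)) ^ p) / (n : ℝ) ^ p := by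
        rw [mul_sum, sum_div]
        exact sum_congr rfl fun k _ => by ring
    _ ≤ C * r / (n : ℝ) ^ p := by gcongr

theorem sum_Ioc_half_mul_le {f u : ℕ → ℝ} {p c₁ U : ℝ} (hp : 0 ≤ p) (hc₁ : 0 ≤ c₁)
    (hfb : ∀ k, 1 ≤ k → f k ≤ c₁ / (k : ℝ) ^ p) (hu : ∀ j, 0 ≤ u j) {n : ℕ} (hn : 1 ≤ n)
    (hU : ∑ j ∈ range (n + 1), u j ≤ U) :
    ∑ k ∈ Ioc (n / 2) n, f k * u (n - k) ≤ c₁ * 2 ^ p * U / (n : ℝ) ^ p := by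
  have hf_le (k : ℕ) (hk : k ∈ Ioc (n / 2) n) : f k ≤ c₁ * 2 ^ p / (n : ℝ) ^ p := by
    rw [mem_Ioc] at hk
    have hk1 : 1 ≤ k := by omega
    calc f k ≤ c₁ / (k : ℝ) ^ p := hfb k hk1
      _ = c₁ * ((n : ℝ) / k) ^ p / (n : ℝ) ^ p :=
          div_rpow_eq_mul_div_rpow (by exact_mod_cast hn) (by exact_mod_cast hk1) _ _
      _ ≤ c₁ * 2 ^ p / (n : ℝ) ^ p := by
          gcongr
          exact div_le_of_le_mul₀ (Nat.cast_nonneg _) zero_le_two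
            (by exact_mod_cast (by omega : n ≤ 2 * k))
  calc ∑ k ∈ Ioc (n / 2) n, f k * u (n - k)
      ≤ ∑ k ∈ Ioc (n / 2) n, c₁ * 2 ^ p / (n : ℝ) ^ p * u (n - k) :=
        sum_le_sum fun k hk => mul_le_mul_of_nonneg_right (hf_le k hk) (hu _)
    _ ≤ c₁ * 2 ^ p / (n : ℝ) ^ p * ∑ k ∈ range (n + 1), u (n - k) := by
        rw [← mul_sum]
        gcongr
        · exact fun k _ _ => hu _
        · exact fun k hk => mem_range.2 (by simp only [mem_Ioc] at hk; omega)
    _ = c₁ * 2 ^ p / (n : ℝ) ^ p * ∑ j ∈ range (n + 1), u j := by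
        rw [← sum_range_reflect u (n + 1)]
        simp only [add_tsub_cancel_right]
    _ ≤ c₁ * 2 ^ p * U / (n : ℝ) ^ p := by
        rw [div_mul_eq_mul_div]
        gcongr

section Renewal

variable {f u : ℕ → ℝ} (hren : ∀ n, 1 ≤ n → u n = ∑ k ∈ Icc 1 n, f k * u (n - k))
  (hf : ∀ k, 1 ≤ k → 0 ≤ f k)
include hren hf

theorem renewal_nonneg (hu0 : 0 ≤ u 0) (n : ℕ) : 0 ≤ u n := by
  induction n using Nat.strong_induction_on with
  | _ n ih =>
    rcases Nat.eq_zero_or_pos n with rfl | hn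
    · exact hu0
    · rw [hren n hn]
      exact sum_nonneg fun k hk =>
        mul_nonneg (hf k (mem_Icc.1 hk).1) (ih _ (by simp only [mem_Icc] at hk; omega))

theorem renewal_sum_range_le {q : ℝ} (hfq : ∀ M, ∑ k ∈ Icc 1 M, f k ≤ q) (hq : q < 1)
    (hu0 : u 0 = 1) (M : ℕ) : ∑ j ∈ range (M + 1), u j ≤ (1 - q)⁻¹ := by
  have hu := renewal_nonneg hren hf (hu0 ▸ zero_le_one)
  have hq0 : 0 ≤ q := by simpa using hfq 0
  set S := ∑ j ∈ range (M + 1), u j with hS_def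
  have hconv : ∑ n ∈ Icc 1 M, u n ≤ q * S :=
    calc ∑ n ∈ Icc 1 M, u n = ∑ n ∈ Icc 1 M, ∑ k ∈ Icc 1 n, f k * u (n - k) :=
          sum_congr rfl fun n hn => hren n (mem_Icc.1 hn).1
      _ ≤ ∑ k ∈ Icc 1 M, ∑ j ∈ range M, f k * u j :=
          sum_Icc_sum_Icc_sub_le (fun k hk j => mul_nonneg (hf k hk) (hu j)) M
      _ = (∑ k ∈ Icc 1 M, f k) * ∑ j ∈ range M, u j := (sum_mul_sum _ _ _ _).symm
      _ ≤ q * S := by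
          gcongr
          · exact sum_nonneg fun j _ => hu j
          · exact hfq M
          · exact sum_le_sum_of_subset_of_nonneg (range_subset_range.2 M.le_succ)
              fun j _ _ => hu j
  have hS : S = 1 + ∑ n ∈ Icc 1 M, u n := by
    rw [hS_def, sum_range_succ', ← sum_range_add_one_eq_sum_Icc, hu0, add_comm]
  rw [inv_eq_one_div, le_div_iff₀ (by linarith)]
  linarith

theorem renewal_le_of_forall_lt {p C r c₁ U : ℝ} (hp : 0 ≤ p) (hC : 0 ≤ C) (hc₁ : 0 ≤ c₁)
    (hfb : ∀ k, 1 ≤ k → f k ≤ c₁ / (k : ℝ) ^ p) (hu : ∀ j, 0 ≤ u j) {n : ℕ} (hn : 1 ≤ n)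
    (hU : ∑ j ∈ range (n + 1), u j ≤ U)
    (hr : ∑ k ∈ Icc 1 (n / 2), f k * ((n : ℝ) / (n - k : ℕ)) ^ p ≤ r)
    (ih : ∀ j, 1 ≤ j → j < n → u j ≤ C / (j : ℝ) ^ p) :
    u n ≤ (C * r + c₁ * 2 ^ p * U) / (n : ℝ) ^ p := by
  have hsplit : Icc 1 n = Icc 1 (n / 2) ∪ Ioc (n / 2) n := by
    ext k; simp only [mem_union, mem_Icc, mem_Ioc]; omega
  rw [hren n hn, hsplit, sum_union (disjoint_left.2 fun k hk hk' => by
    simp only [mem_Icc, mem_Ioc] at hk hk'; omega), add_div]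
  exact add_le_add (sum_Icc_half_mul_le hf hC hn ih hr)
    (sum_Ioc_half_mul_le hp hc₁ hfb hu hn hU)

theorem renewal_le_div_rpow {p q r c₁ : ℝ} (hp : 0 ≤ p) (hc₁ : 0 ≤ c₁)
    (hfq : ∀ M, ∑ k ∈ Icc 1 M, f k ≤ q) (hq : q < 1) (hu0 : u 0 = 1)
    (hfb : ∀ k, 1 ≤ k → f k ≤ c₁ / (k : ℝ) ^ p) (hr : r < 1) (N : ℕ)
    (hN : ∀ n, N ≤ n → ∑ k ∈ Icc 1 (n / 2), f k * ((n : ℝ) / (n - k : ℕ)) ^ p ≤ r) :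
    ∃ C, 0 < C ∧ ∀ n, 1 ≤ n → u n ≤ C / (n : ℝ) ^ p := by
  have hu := renewal_nonneg hren hf (hu0 ▸ zero_le_one)
  set B := c₁ * 2 ^ p * (1 - q)⁻¹
  set C := max (max (∑ j ∈ Icc 1 N, u j * (j : ℝ) ^ p) (B / (1 - r))) 1
  have hB : C * r + B ≤ C := by
    have := (div_le_iff₀ (sub_pos.2 hr)).1 ((le_max_right _ _).trans (le_max_left _ _) :
      B / (1 - r) ≤ C)
    linarith
  refine ⟨C, lt_max_of_lt_right one_pos, fun n => ?_⟩
  induction n using Nat.strong_induction_on with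
  | _ n ih =>
    intro hn
    have hnp : 0 < (n : ℝ) ^ p := Real.rpow_pos_of_pos (by exact_mod_cast hn) p
    rcases le_or_gt n N with hnN | hnN
    · rw [le_div_iff₀ hnp]
      exact (single_le_sum (f := fun j : ℕ => u j * (j : ℝ) ^ p)
        (fun j _ => mul_nonneg (hu j) (by positivity)) (mem_Icc.2 ⟨hn, hnN⟩)).trans
        ((le_max_left _ _).trans (le_max_left _ _))
    · calc u n ≤ (C * r + B) / (n : ℝ) ^ p :=
            renewal_le_of_forall_lt hren hf hp (zero_le_one.trans (le_max_right _ _)) hc₁ hfb hu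
              hn (renewal_sum_range_le hren hf hfq hq hu0 n) (hN n hnN.le)
              fun j hj hjn => ih j hjn hj
        _ ≤ C / (n : ℝ) ^ p := by gcongr

end Renewal

/-- **Lemma (renewal sequence bound).** If `(f_k)_{k≥1}` are positive with `Σ_{k≥1} f_k < 1`,
`u_0 = 1` and `u_n = Σ_{k=1}^n f_k u_{n−k}` for `n ≥ 1`, and `f_n ≤ c₁ / n^{1+α}` for all
`n ≥ 1`, then there is `c₂ > 0` with `u_n ≤ c₂ / n^{1+α}` for all `n ≥ 1`. -/
theorem renewal_sequence_bound (f : ℕ → ℝ) (hfpos : ∀ k : ℕ, 1 ≤ k → 0 < f k)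
    (hsum : Summable fun k : ℕ => f (k + 1)) (hlt : ∑' k : ℕ, f (k + 1) < 1)
    (u : ℕ → ℝ) (hu0 : u 0 = 1)
    (hren : ∀ n : ℕ, 1 ≤ n → u n = ∑ k ∈ Finset.Icc 1 n, f k * u (n - k))
    (c₁ α : ℝ) (hc₁ : 0 < c₁) (hα : 0 < α)
    (hfb : ∀ n : ℕ, 1 ≤ n → f n ≤ c₁ / (n : ℝ) ^ (1 + α)) :
    ∃ c₂ : ℝ, 0 < c₂ ∧ ∀ n : ℕ, 1 ≤ n → u n ≤ c₂ / (n : ℝ) ^ (1 + α) := by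
  have hf (k : ℕ) (hk : 1 ≤ k) : 0 ≤ f k := (hfpos k hk).le
  have hfq (M : ℕ) : ∑ k ∈ Icc 1 M, f k ≤ ∑' k, f (k + 1) := by
    rw [← sum_range_add_one_eq_sum_Icc]
    exact hsum.sum_le_tsum _ fun k _ => hf _ k.succ_pos
  have hp : (0 : ℝ) ≤ 1 + α := by linarith
  obtain ⟨N, hN⟩ := eventually_atTop.1 <| (tendsto_sum_Icc_half_mul_rpow hsum hp).eventually
    (gt_mem_nhds (show ∑' k, f (k + 1) < (1 + ∑' k, f (k + 1)) / 2 by linarith))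
  exact renewal_le_div_rpow hren hf hp hc₁.le hfq hlt hu0 hfb (by linarith) N
    fun n hn => (hN n hn).le
end

section
/- For all real β ≥ 1, δ > 0 and integers k ≥ 3 and n ≥ k+1: Σ_{j=⌊n^β⌋}^{⌊(n+1)^β⌋−1} 1/(j − ⌊(n−k)^β⌋)^{1+δ} ≤ 6 · 2^β · 4^δ · β · δ^{−1} / k^{δβ+1}. -/
/-! Each denominator satisfies `j - ⌊(n-k)^β⌋ > n^β - (n-k)^β - 1 ≥ k n^(β-1) - 1 ≥ k n^(β-1) / 2`,
while by Bernoulli's inequality the block has at most `(n+1)^β - n^β + 1 ≤ 2^β β n^(β-1)` terms.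
So the sum is at most `2^β β 2^(1+δ) n^(β-1) / (k n^(β-1))^(1+δ)`, and `n ≥ k` turns the surplus
power `n^((β-1)δ)` into `k^((β-1)δ)`; the inequality `δ ≤ 3 · 2^δ` absorbs the constants. -/

open Finset

namespace Real

lemma rpow_eq_rpow_sub_one_mul {x β : ℝ} (hx : 0 ≤ x) (hβ : β ≠ 0) :
    x ^ β = x ^ (β - 1) * x := by
  simpa using rpow_add_one' hx (by simpa using hβ : β - 1 + 1 ≠ 0)

lemma mul_rpow_sub_one_le_rpow_sub_rpow {x y β : ℝ} (hy : 0 ≤ y) (hyx : y ≤ x) (hβ : 1 ≤ β) :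
    (x - y) * x ^ (β - 1) ≤ x ^ β - y ^ β := by
  have hpow : y ^ (β - 1) ≤ x ^ (β - 1) := rpow_le_rpow hy hyx (by linarith)
  have hx := rpow_eq_rpow_sub_one_mul (hy.trans hyx) (by linarith : β ≠ 0)
  have hy' := rpow_eq_rpow_sub_one_mul hy (by linarith : β ≠ 0)
  nlinarith

/-- Bernoulli's inequality applied to `(y / x) ^ β = (1 + (y / x - 1)) ^ β`. -/
lemma rpow_sub_rpow_le_mul_rpow_sub_one {x y β : ℝ} (hy : 0 ≤ y) (hyx : y ≤ x) (hβ : 1 ≤ β) :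
    x ^ β - y ^ β ≤ β * x ^ (β - 1) * (x - y) := by
  rcases hyx.eq_or_lt with rfl | hyx
  · simp
  have hx : 0 < x := hy.trans_lt hyx
  have hbern := one_add_mul_self_le_rpow_one_add (s := y / x - 1)
    (by linarith [div_nonneg hy hx.le]) hβ
  rw [add_sub_cancel, div_rpow hy hx.le, le_div_iff₀ (rpow_pos_of_pos hx β)] at hbern
  have hxβ := rpow_eq_rpow_sub_one_mul hx.le (by linarith : β ≠ 0)
  have hlin : (y / x - 1) * x = y - x := by field_simp
  rw [hxβ] at hbern ⊢
  linear_combination hbern - β * x ^ (β - 1) * hlin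

lemma self_le_three_mul_two_rpow (x : ℝ) : x ≤ 3 * 2 ^ x := by
  rcases le_or_gt x 0 with hx | hx
  · linarith [rpow_pos_of_pos two_pos x]
  have hexp : log 2 * x + 1 ≤ 2 ^ x := by
    rw [rpow_def_of_pos two_pos]; exact add_one_le_exp _
  nlinarith [log_two_gt_d9]

lemma rpow_mul_rpow_le_mul_rpow_sub_one_rpow {k x β δ : ℝ} (hk : 0 < k) (hkx : k ≤ x)
    (hβ : 1 ≤ β) (hδ : 0 ≤ δ) :
    k ^ (δ * β + 1) * x ^ (β - 1) ≤ (k * x ^ (β - 1)) ^ (1 + δ) := by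
  have hx : 0 < x := hk.trans_le hkx
  have hkδ : k ^ ((β - 1) * δ) ≤ x ^ ((β - 1) * δ) :=
    rpow_le_rpow hk.le hkx (mul_nonneg (by linarith) hδ)
  calc k ^ (δ * β + 1) * x ^ (β - 1) = k ^ (1 + δ) * x ^ (β - 1) * k ^ ((β - 1) * δ) := by
        rw [show δ * β + 1 = 1 + δ + (β - 1) * δ by ring, rpow_add hk]; ring
    _ ≤ k ^ (1 + δ) * x ^ (β - 1) * x ^ ((β - 1) * δ) := by gcongr
    _ = (k * x ^ (β - 1)) ^ (1 + δ) := by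
        rw [mul_rpow hk.le (rpow_nonneg hx.le _), ← rpow_mul hx.le, mul_one_add, rpow_add hx]
        ring

lemma two_rpow_one_add_le {δ : ℝ} (hδ : 0 < δ) : (2 : ℝ) ^ (1 + δ) ≤ 6 * 4 ^ δ * δ⁻¹ := by
  have h4 : (4 : ℝ) ^ δ = 2 ^ δ * 2 ^ δ := by
    rw [← mul_rpow zero_le_two zero_le_two]; norm_num
  rw [rpow_one_add' zero_le_two (by linarith), h4, ← div_eq_mul_inv, le_div_iff₀ hδ]
  nlinarith [self_le_three_mul_two_rpow δ, rpow_pos_of_pos two_pos δ]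

end Real

open Real

lemma card_Ico_floor_floor_le {u v : ℝ} (hv : 0 ≤ v) (huv : u ≤ v) :
    ((Ico ⌊u⌋₊ ⌊v⌋₊).card : ℝ) ≤ v - u + 1 := by
  rw [Nat.card_Ico, Nat.cast_sub (Nat.floor_le_floor huv)]
  linarith [Nat.floor_le hv, Nat.sub_one_lt_floor u]

lemma sub_sub_one_lt_natCast_sub_floor {x y : ℝ} {j : ℕ} (hy : 0 ≤ y) (hj : ⌊x⌋₊ ≤ j) :
    x - y - 1 < (j : ℝ) - ⌊y⌋₊ := by
  have hj' : (⌊x⌋₊ : ℝ) ≤ j := by exact_mod_cast hj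
  linarith [Nat.floor_le hy, Nat.sub_one_lt_floor x]

lemma card_Ico_floor_rpow_le {x β : ℝ} (hx : 1 ≤ x) (hβ : 1 ≤ β) :
    ((Ico ⌊x ^ β⌋₊ ⌊(x + 1) ^ β⌋₊).card : ℝ) ≤ 2 ^ β * β * x ^ (β - 1) := by
  have hmono : x ^ β ≤ (x + 1) ^ β := rpow_le_rpow (by linarith) (by linarith) (by linarith)
  have hincr := rpow_sub_rpow_le_mul_rpow_sub_one (by linarith : 0 ≤ x)
    (le_add_of_nonneg_right zero_le_one) hβ
  have hone : 1 ≤ β * (x + 1) ^ (β - 1) :=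
    one_le_mul_of_one_le_of_one_le hβ (one_le_rpow (by linarith) (by linarith))
  have hdouble : (x + 1) ^ (β - 1) ≤ 2 ^ (β - 1) * x ^ (β - 1) := by
    rw [← mul_rpow zero_le_two (by linarith)]
    exact rpow_le_rpow (by linarith) (by linarith) (by linarith)
  have h2 : (2 : ℝ) ^ β = 2 * 2 ^ (β - 1) := by
    rw [rpow_eq_rpow_sub_one_mul zero_le_two (by linarith)]; ring
  calc ((Ico ⌊x ^ β⌋₊ ⌊(x + 1) ^ β⌋₊).card : ℝ) ≤ (x + 1) ^ β - x ^ β + 1 :=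
        card_Ico_floor_floor_le (rpow_nonneg (by linarith) β) hmono
    _ ≤ 2 * β * (x + 1) ^ (β - 1) := by linarith
    _ ≤ 2 ^ β * β * x ^ (β - 1) := by rw [h2]; nlinarith

lemma half_mul_rpow_le_natCast_sub_floor {x k β : ℝ} {j : ℕ} (hk : 0 ≤ k) (hkx : k ≤ x)
    (hβ : 1 ≤ β) (hkx2 : 2 ≤ k * x ^ (β - 1)) (hj : ⌊x ^ β⌋₊ ≤ j) :
    k * x ^ (β - 1) / 2 ≤ (j : ℝ) - ⌊(x - k) ^ β⌋₊ := by
  have hgap := mul_rpow_sub_one_le_rpow_sub_rpow (sub_nonneg.2 hkx) (sub_le_self x hk) hβ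
  rw [sub_sub_cancel] at hgap
  linarith [sub_sub_one_lt_natCast_sub_floor (rpow_nonneg (sub_nonneg.2 hkx) β) hj]

/-- **Lemma (block sum bound).** For `β ≥ 1`, `δ > 0` and integers `k ≥ 3`, `n ≥ k + 1`:
`Σ_{j=⌊n^β⌋}^{⌊(n+1)^β⌋−1} (j − ⌊(n−k)^β⌋)^{−(1+δ)} ≤ 6 · 2^β · 4^δ · β · δ⁻¹ / k^{δβ+1}`. -/
theorem block_sum_bound (β δ : ℝ) (hβ : 1 ≤ β) (hδ : 0 < δ) (k n : ℕ) (hk : 3 ≤ k)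
    (hn : k + 1 ≤ n) :
    ∑ j ∈ Finset.Ico ⌊(n : ℝ) ^ β⌋₊ ⌊((n : ℝ) + 1) ^ β⌋₊,
        (1 : ℝ) / ((j : ℝ) - (⌊((n : ℝ) - (k : ℝ)) ^ β⌋₊ : ℝ)) ^ (1 + δ)
      ≤ 6 * 2 ^ β * 4 ^ δ * β * δ⁻¹ / (k : ℝ) ^ (δ * β + 1) := by
  have hk3 : (3 : ℝ) ≤ k := by exact_mod_cast hk
  have hkn : (k : ℝ) + 1 ≤ n := by exact_mod_cast hn
  have hnβ : 1 ≤ (n : ℝ) ^ (β - 1) := one_le_rpow (by linarith) (by linarith)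
  set c := (k : ℝ) * (n : ℝ) ^ (β - 1)
  have hc3 : 3 ≤ c := by nlinarith
  have hterm : ∀ j ∈ Ico ⌊(n : ℝ) ^ β⌋₊ ⌊((n : ℝ) + 1) ^ β⌋₊,
      (1 : ℝ) / ((j : ℝ) - ⌊((n : ℝ) - k) ^ β⌋₊) ^ (1 + δ) ≤ 1 / (c / 2) ^ (1 + δ) := by
    intro j hj
    have hden := half_mul_rpow_le_natCast_sub_floor (k := k) (by linarith) (by linarith) hβ
      (by linarith) (mem_Ico.1 hj).1
    gcongr
  calc _ ≤ _ := sum_le_card_nsmul _ _ _ hterm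
    _ ≤ 2 ^ β * β * (n : ℝ) ^ (β - 1) * (1 / (c / 2) ^ (1 + δ)) := by
        rw [nsmul_eq_mul]
        gcongr
        exact card_Ico_floor_rpow_le (by linarith) hβ
    _ = 2 ^ β * β * 2 ^ (1 + δ) * ((n : ℝ) ^ (β - 1) / c ^ (1 + δ)) := by
        rw [div_rpow (by linarith) zero_le_two]; field_simp
    _ ≤ 2 ^ β * β * 2 ^ (1 + δ) * (1 / (k : ℝ) ^ (δ * β + 1)) := by
        refine mul_le_mul_of_nonneg_left ?_ (by positivity)
        rw [div_le_div_iff₀ (by positivity) (by positivity), one_mul, mul_comm]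
        exact rpow_mul_rpow_le_mul_rpow_sub_one_rpow (by linarith) (by linarith) hβ hδ.le
    _ ≤ 2 ^ β * β * (6 * 4 ^ δ * δ⁻¹) * (1 / (k : ℝ) ^ (δ * β + 1)) := by
        gcongr
        exact two_rpow_one_add_le hδ
    _ = 6 * 2 ^ β * 4 ^ δ * β * δ⁻¹ / (k : ℝ) ^ (δ * β + 1) := by ring
end

section
/- Let A be a finite alphabet and φ a regular normalized potential on X_- = A^{ℤ_-}, i.e. lim_{k→∞} var_k(φ) = 0 and there exists ε > 0 with e^{φ(x)} ≥ ε for all x ∈ X_-. Then there exist positive constants K₁ and K₂ such that for all k ≥ 1, K₁ · var_k(φ)² ≤ χ²_k(φ) ≤ K₂ · var_k(φ)². -/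
open MeasureTheory ENNReal

noncomputable section

section Aux

private lemma exp_abs_sub_le' {u v : ℝ} (hu : Real.exp u ≤ 1) (hv : Real.exp v ≤ 1) :
    |Real.exp u - Real.exp v| ≤ |u - v| := by
  wlog h : v ≤ u
  · rw [abs_sub_comm, abs_sub_comm u v]; exact this hv hu (le_of_not_ge h)
  rw [abs_of_nonneg (sub_nonneg.2 (Real.exp_le_exp.2 h)), abs_of_nonneg (sub_nonneg.2 h)]
  have h1 : (v - u + 1) * Real.exp u ≤ Real.exp v := by
    have h2 : (v - u + 1) * Real.exp u ≤ Real.exp (v - u) * Real.exp u :=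
      mul_le_mul_of_nonneg_right (Real.add_one_le_exp (v - u)) (Real.exp_pos u).le
    rwa [← Real.exp_add, sub_add_cancel] at h2
  nlinarith [Real.exp_pos u]

private lemma abs_log_sub_le' {ε a b : ℝ} (hε : 0 < ε) (ha : ε ≤ a) (hb : ε ≤ b) :
    |Real.log a - Real.log b| ≤ |a - b| / ε := by
  wlog h : b ≤ a
  · rw [abs_sub_comm, abs_sub_comm a b]; exact this hε hb ha (le_of_not_ge h)
  have hb0 : 0 < b := lt_of_lt_of_le hε hb
  have ha0 : 0 < a := lt_of_lt_of_le hε ha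
  rw [abs_of_nonneg (sub_nonneg.2 (Real.log_le_log hb0 h)),
    abs_of_nonneg (sub_nonneg.2 h)]
  have h1 : Real.log a - Real.log b ≤ a / b - 1 := by
    rw [← Real.log_div ha0.ne' hb0.ne']
    exact Real.log_le_sub_one_of_pos (div_pos ha0 hb0)
  have h2 : a / b - 1 = (a - b) / b := by field_simp
  have h3 : (a - b) / b ≤ (a - b) / ε := by gcongr
  linarith

private lemma core_ineq {A : Type*} [Fintype A] [Nonempty A] {p q : A → ℝ} {ε : ℝ}
    (hε : 0 < ε) (hp : ∀ b, ε ≤ p b) (hq : ∀ b, ε ≤ q b)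
    (hp1 : ∀ b, p b ≤ 1) (hq1 : ∀ b, q b ≤ 1) :
    ε ^ 2 / (Fintype.card A : ℝ) *
        (∑ b, |Real.log (p b) - Real.log (q b)|) ^ 2 ≤ ∑ b, (p b - q b) ^ 2 / q b ∧
    ∑ b, (p b - q b) ^ 2 / q b ≤
      (1 / ε) * (∑ b, |Real.log (p b) - Real.log (q b)|) ^ 2 := by
  have hn : (0 : ℝ) < Fintype.card A := by positivity
  have hlog : ∀ b, |Real.log (p b) - Real.log (q b)| ≤ |p b - q b| / ε := fun b =>
    abs_log_sub_le' hε (hp b) (hq b)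
  have hexp : ∀ b, |p b - q b| ≤ |Real.log (p b) - Real.log (q b)| := by
    intro b
    have h1 : Real.exp (Real.log (p b)) = p b := Real.exp_log (lt_of_lt_of_le hε (hp b))
    have h2 : Real.exp (Real.log (q b)) = q b := Real.exp_log (lt_of_lt_of_le hε (hq b))
    have h3 := exp_abs_sub_le' (u := Real.log (p b)) (v := Real.log (q b))
      (by rw [h1]; exact hp1 b) (by rw [h2]; exact hq1 b)
    rwa [h1, h2] at h3
  constructor
  · -- lower bound
    have s1 : ∑ b, |Real.log (p b) - Real.log (q b)| ≤ (∑ b, |p b - q b|) / ε := by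
      rw [Finset.sum_div]; exact Finset.sum_le_sum fun b _ => hlog b
    have s2 : (∑ b, |p b - q b|) ^ 2 ≤ (Fintype.card A : ℝ) * ∑ b, (p b - q b) ^ 2 := by
      have := sq_sum_le_card_mul_sum_sq (s := (Finset.univ : Finset A))
        (f := fun b => |p b - q b|)
      simpa [sq_abs] using this
    have s3 : ∑ b, (p b - q b) ^ 2 ≤ ∑ b, (p b - q b) ^ 2 / q b := by
      refine Finset.sum_le_sum fun b _ => ?_
      have hq0 : 0 < q b := lt_of_lt_of_le hε (hq b)
      rw [le_div_iff₀ hq0]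
      nlinarith [sq_nonneg (p b - q b), hq1 b]
    have s4 : (∑ b, |Real.log (p b) - Real.log (q b)|) ^ 2
        ≤ ((∑ b, |p b - q b|) / ε) ^ 2 := by
      have h0 : 0 ≤ ∑ b, |Real.log (p b) - Real.log (q b)| :=
        Finset.sum_nonneg fun b _ => abs_nonneg _
      nlinarith [s1, h0]
    have s5 : ((∑ b, |p b - q b|) / ε) ^ 2 = (∑ b, |p b - q b|) ^ 2 / ε ^ 2 := by
      rw [div_pow]
    rw [div_mul_eq_mul_div, div_le_iff₀ hn]
    calc ε ^ 2 * (∑ b, |Real.log (p b) - Real.log (q b)|) ^ 2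
        ≤ ε ^ 2 * ((∑ b, |p b - q b|) ^ 2 / ε ^ 2) := by rw [← s5]; gcongr
      _ = (∑ b, |p b - q b|) ^ 2 := by field_simp
      _ ≤ (Fintype.card A : ℝ) * ∑ b, (p b - q b) ^ 2 := s2
      _ ≤ (∑ b, (p b - q b) ^ 2 / q b) * (Fintype.card A : ℝ) := by
          rw [mul_comm]; gcongr
  · -- upper bound
    have t1 : ∑ b, (p b - q b) ^ 2 / q b ≤ (1 / ε) * ∑ b, (p b - q b) ^ 2 := by
      rw [Finset.mul_sum]
      refine Finset.sum_le_sum fun b _ => ?_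
      rw [one_div, inv_mul_eq_div]
      gcongr
      exact hq b
    have t2 : ∑ b, (p b - q b) ^ 2 ≤ ∑ b, |Real.log (p b) - Real.log (q b)| ^ 2 := by
      refine Finset.sum_le_sum fun b _ => ?_
      have := hexp b
      nlinarith [abs_nonneg (p b - q b), sq_abs (p b - q b)]
    have t3 : ∑ b, |Real.log (p b) - Real.log (q b)| ^ 2
        ≤ (∑ b, |Real.log (p b) - Real.log (q b)|) ^ 2 :=
      Finset.sum_sq_le_sq_sum_of_nonneg fun b _ => abs_nonneg _
    calc ∑ b, (p b - q b) ^ 2 / q b ≤ (1 / ε) * ∑ b, (p b - q b) ^ 2 := t1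
      _ ≤ (1 / ε) * (∑ b, |Real.log (p b) - Real.log (q b)|) ^ 2 := by
          have h1ε : (0:ℝ) ≤ 1/ε := by positivity
          exact mul_le_mul_of_nonneg_left (le_trans t2 t3) h1ε

end Aux

private lemma mul_sq_iSup_le' {ι : Sort*} (f : ι → ℝ≥0∞) (c t : ℝ≥0∞)
    (h : ∀ i, c * (f i) ^ 2 ≤ t) : c * (⨆ i, f i) ^ 2 ≤ t := by
  have key : ∀ i j, c * (f i * f j) ≤ t := by
    intro i j
    rcases le_total (f i) (f j) with hij | hij
    · calc c * (f i * f j) ≤ c * (f j * f j) := by gcongr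
        _ ≤ t := by rw [← sq]; exact h j
    · calc c * (f i * f j) ≤ c * (f i * f i) := by gcongr
        _ ≤ t := by rw [← sq]; exact h i
  rw [sq, ENNReal.iSup_mul, ENNReal.mul_iSup]
  refine iSup_le fun i => ?_
  rw [ENNReal.mul_iSup, ENNReal.mul_iSup]
  exact iSup_le fun j => key i j


/-- For a **regular** normalized potential on a finite alphabet, `var_k(φ)²` and `χ²_k(φ)`
are comparable: there are `K₁, K₂ > 0` with `K₁ var_k(φ)² ≤ χ²_k(φ) ≤ K₂ var_k(φ)²`. -/
theorem chiSq_comparable_var_sq {A : Type*} [Finite A] [MeasurableSpace A]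
    [DiscreteMeasurableSpace A]
    (φ : (ℕ → A) → ℝ) (hφ : GGT.IsNormalized φ)
    (hcont : Filter.Tendsto (fun k => GGT.varE φ k) Filter.atTop (nhds 0))
    (hpos : ∃ ε : ℝ, 0 < ε ∧ ∀ x : ℕ → A, ε ≤ Real.exp (φ x)) :
    ∃ K₁ K₂ : ℝ, 0 < K₁ ∧ 0 < K₂ ∧
      ∀ k : ℕ, 1 ≤ k →
        ENNReal.ofReal K₁ * (GGT.varE φ k) ^ 2 ≤ GGT.chiSq φ k ∧
        GGT.chiSq φ k ≤ ENNReal.ofReal K₂ * (GGT.varE φ k) ^ 2 := by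
  obtain ⟨ε, hε, hεle⟩ := hpos
  rcases isEmpty_or_nonempty A with hA | hA
  · refine ⟨1, 1, one_pos, one_pos, fun k hk => ?_⟩
    haveI : IsEmpty (ℕ → A) := ⟨fun f => hA.false (f 0)⟩
    have h1 : GGT.varE φ k = 0 := by simp [GGT.varE]
    have h2 : GGT.chiSq φ k = 0 := by simp [GGT.chiSq]
    simp [h1, h2]
  · haveI : Nonempty A := ⟨Classical.arbitrary A⟩
    cases nonempty_fintype A
    have hn0 : (0 : ℝ) < (Fintype.card A : ℝ) := by
      exact_mod_cast Fintype.card_pos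
    refine ⟨ε ^ 2 / (Fintype.card A : ℝ), 1 / ε, by positivity, by positivity,
      fun k hk => ?_⟩
    have hle1 : ∀ w : ℕ → A, ∀ b : A, Real.exp (φ (GGT.cons b w)) ≤ 1 := by
      intro w b
      have h := hφ w
      rw [tsum_fintype] at h
      calc Real.exp (φ (GGT.cons b w)) ≤ ∑ a, Real.exp (φ (GGT.cons a w)) :=
            Finset.single_le_sum (f := fun a => Real.exp (φ (GGT.cons a w)))
              (fun a _ => (Real.exp_pos _).le) (Finset.mem_univ b)
        _ = 1 := h
    have hterm : ∀ z x y : ℕ → A,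
        (∑' b : A, ENNReal.ofReal
            |φ (GGT.cons b (GGT.wcat k z x)) - φ (GGT.cons b (GGT.wcat k z y))|)
          = ENNReal.ofReal (∑ b : A,
            |φ (GGT.cons b (GGT.wcat k z x)) - φ (GGT.cons b (GGT.wcat k z y))|) := by
      intro z x y
      rw [tsum_fintype, ← ENNReal.ofReal_sum_of_nonneg (fun b _ => abs_nonneg _)]
    have hterm2 : ∀ z x y : ℕ → A,
        (∑' b : A, ENNReal.ofReal
            ((Real.exp (φ (GGT.cons b (GGT.wcat k z x)))
              - Real.exp (φ (GGT.cons b (GGT.wcat k z y)))) ^ 2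
              / Real.exp (φ (GGT.cons b (GGT.wcat k z y)))))
          = ENNReal.ofReal (∑ b : A,
            (Real.exp (φ (GGT.cons b (GGT.wcat k z x)))
              - Real.exp (φ (GGT.cons b (GGT.wcat k z y)))) ^ 2
              / Real.exp (φ (GGT.cons b (GGT.wcat k z y)))) := by
      intro z x y
      rw [tsum_fintype, ← ENNReal.ofReal_sum_of_nonneg (fun b _ => by positivity)]
    have hcore : ∀ z x y : ℕ → A,
        (ε ^ 2 / (Fintype.card A : ℝ) * (∑ b : A,
            |φ (GGT.cons b (GGT.wcat k z x)) - φ (GGT.cons b (GGT.wcat k z y))|) ^ 2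
          ≤ ∑ b : A, (Real.exp (φ (GGT.cons b (GGT.wcat k z x)))
              - Real.exp (φ (GGT.cons b (GGT.wcat k z y)))) ^ 2
              / Real.exp (φ (GGT.cons b (GGT.wcat k z y)))) ∧
        (∑ b : A, (Real.exp (φ (GGT.cons b (GGT.wcat k z x)))
              - Real.exp (φ (GGT.cons b (GGT.wcat k z y)))) ^ 2
              / Real.exp (φ (GGT.cons b (GGT.wcat k z y))))
          ≤ (1 / ε) * (∑ b : A,
            |φ (GGT.cons b (GGT.wcat k z x)) - φ (GGT.cons b (GGT.wcat k z y))|) ^ 2 := by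
      intro z x y
      have h := core_ineq (A := A)
        (p := fun b => Real.exp (φ (GGT.cons b (GGT.wcat k z x))))
        (q := fun b => Real.exp (φ (GGT.cons b (GGT.wcat k z y)))) hε
        (fun b => hεle _) (fun b => hεle _) (fun b => hle1 _ b) (fun b => hle1 _ b)
      simpa [Real.log_exp] using h
    constructor
    · rw [GGT.varE]
      apply mul_sq_iSup_le'; intro z
      apply mul_sq_iSup_le'; intro x
      apply mul_sq_iSup_le'; intro y
      rw [hterm z x y, ← ENNReal.ofReal_pow (by positivity),
        ← ENNReal.ofReal_mul (by positivity)]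
      refine le_trans (ENNReal.ofReal_le_ofReal (hcore z x y).1) ?_
      rw [GGT.chiSq]
      refine le_iSup_of_le z (le_iSup_of_le x (le_iSup_of_le y ?_))
      rw [hterm2 z x y]
    · rw [GGT.chiSq]
      refine iSup_le fun z => iSup_le fun x => iSup_le fun y => ?_
      rw [hterm2 z x y]
      calc ENNReal.ofReal (∑ b : A,
            (Real.exp (φ (GGT.cons b (GGT.wcat k z x)))
              - Real.exp (φ (GGT.cons b (GGT.wcat k z y)))) ^ 2
              / Real.exp (φ (GGT.cons b (GGT.wcat k z y))))
          ≤ ENNReal.ofReal ((1 / ε) * (∑ b : A,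
            |φ (GGT.cons b (GGT.wcat k z x)) - φ (GGT.cons b (GGT.wcat k z y))|) ^ 2) :=
            ENNReal.ofReal_le_ofReal (hcore z x y).2
        _ = ENNReal.ofReal (1 / ε) * (ENNReal.ofReal (∑ b : A,
            |φ (GGT.cons b (GGT.wcat k z x)) - φ (GGT.cons b (GGT.wcat k z y))|)) ^ 2 := by
            rw [ENNReal.ofReal_mul (by positivity), ENNReal.ofReal_pow (by positivity)]
        _ ≤ ENNReal.ofReal (1 / ε) * (GGT.varE φ k) ^ 2 := by
            gcongr
            rw [GGT.varE]
            exact le_iSup_of_le z (le_iSup_of_le x (le_iSup_of_le y (hterm z x y).ge))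
end
end

section
/- Let A be a finite alphabet and φ a regular normalized potential on X_- = A^{ℤ_-} (i.e. lim_{k→∞} var_k(φ) = 0 and there exists ε > 0 with e^{φ(x)} ≥ ε for all x ∈ X_-) satisfying Assumption (A) with constants C > 0 and δ > 0. Then there exists C' > 0 such that for all k ≥ 1, var_k(φ) ≤ C' / k^{(1+δ)/2}. -/
open MeasureTheory ENNReal

noncomputable section

lemma aux_abs_sub_le {eps s t : ℝ} (hs : eps ≤ Real.exp s) (ht : eps ≤ Real.exp t) :
    eps * |s - t| ≤ |Real.exp s - Real.exp t| := by
  rcases le_total s t with h | h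
  · have he : Real.exp t = Real.exp s * Real.exp (t - s) := by
      rw [← Real.exp_add]; ring_nf
    have h1 := Real.add_one_le_exp (t - s)
    have h2 : Real.exp s ≤ Real.exp t := Real.exp_le_exp.mpr h
    rw [abs_of_nonpos (by linarith), abs_of_nonpos (by linarith)]
    nlinarith [Real.exp_pos s]
  · have he : Real.exp s = Real.exp t * Real.exp (s - t) := by
      rw [← Real.exp_add]; ring_nf
    have h1 := Real.add_one_le_exp (s - t)
    have h2 : Real.exp t ≤ Real.exp s := Real.exp_le_exp.mpr h
    rw [abs_of_nonneg (by linarith), abs_of_nonneg (by linarith)]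
    nlinarith [Real.exp_pos t]

/-- For a **regular** normalized potential on a finite alphabet satisfying Assumption (A),
the variation rate satisfies `var_k(φ) ≤ C' / k^((1+δ)/2)` for some `C' > 0`. -/
theorem var_rate_of_assumptionA {A : Type*} [Finite A] [MeasurableSpace A]
    [DiscreteMeasurableSpace A]
    (φ : (ℕ → A) → ℝ) (hφ : GGT.IsNormalized φ)
    (hcont : Filter.Tendsto (fun k => GGT.varE φ k) Filter.atTop (nhds 0))
    (hpos : ∃ ε : ℝ, 0 < ε ∧ ∀ x : ℕ → A, ε ≤ Real.exp (φ x))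
    (C δ : ℝ) (hC : 0 < C) (hδ : 0 < δ) (hA : GGT.AssumptionA φ C δ) :
    ∃ C' : ℝ, 0 < C' ∧
      ∀ k : ℕ, 1 ≤ k →
        GGT.varE φ k ≤ ENNReal.ofReal (C' / (k : ℝ) ^ ((1 + δ) / 2)) := by
  classical
  haveI := Fintype.ofFinite A
  obtain ⟨eps, heps, hepsle⟩ := hpos
  refine ⟨Real.sqrt C / eps, by positivity, fun k hk => ?_⟩
  have hk0 : (0:ℝ) < (k:ℝ) := by exact_mod_cast Nat.lt_of_lt_of_le Nat.zero_lt_one hk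
  set T : ℝ := C / (k:ℝ) ^ (1 + δ) with hTdef
  have hT : 0 ≤ T := by positivity
  rw [GGT.varE]
  refine iSup_le fun z => iSup_le fun x => iSup_le fun y => ?_
  set u : A → ℝ := fun b => Real.exp (φ (GGT.cons b (GGT.wcat k z x))) with hu
  set v : A → ℝ := fun b => Real.exp (φ (GGT.cons b (GGT.wcat k z y))) with hv
  have hvpos : ∀ b, 0 < v b := fun b => Real.exp_pos _
  -- chi-square bound in real terms
  have hchi : ∑' b : A, ENNReal.ofReal ((u b - v b) ^ 2 / v b) ≤ ENNReal.ofReal T := by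
    refine le_trans ?_ (hA k hk)
    rw [GGT.chiSq]
    exact le_iSup_of_le z (le_iSup_of_le x (le_iSup_of_le y le_rfl))
  rw [tsum_fintype, ← ENNReal.ofReal_sum_of_nonneg
    (fun b _ => div_nonneg (sq_nonneg _) (hvpos b).le)] at hchi
  set S : ℝ := ∑ b : A, (u b - v b) ^ 2 / v b with hSdef
  have hSnn : 0 ≤ S := Finset.sum_nonneg fun b _ => div_nonneg (sq_nonneg _) (hvpos b).le
  have hST : S ≤ T := (ENNReal.ofReal_le_ofReal_iff hT).mp hchi
  -- the sum of `v` is 1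
  have hsumv : ∑ b : A, v b = 1 := by
    have h := hφ (GGT.wcat k z y)
    rwa [tsum_fintype] at h
  -- Cauchy-Schwarz
  have hCS : ∑ b : A, |u b - v b| ≤ Real.sqrt S := by
    have key := Real.sum_mul_le_sqrt_mul_sqrt Finset.univ
      (fun b => |u b - v b| / Real.sqrt (v b)) (fun b => Real.sqrt (v b))
    have e1 : ∀ b : A, |u b - v b| / Real.sqrt (v b) * Real.sqrt (v b) = |u b - v b| :=
      fun b => div_mul_cancel₀ _ (Real.sqrt_ne_zero'.mpr (hvpos b)).symm.symm
    have e2 : ∀ b : A, (|u b - v b| / Real.sqrt (v b)) ^ 2 = (u b - v b) ^ 2 / v b := by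
      intro b
      rw [div_pow, sq_abs, Real.sq_sqrt (hvpos b).le]
    have e3 : ∀ b : A, (Real.sqrt (v b)) ^ 2 = v b := fun b => Real.sq_sqrt (hvpos b).le
    simp only [e1, e2, e3] at key
    rw [hsumv, Real.sqrt_one, mul_one] at key
    exact key.trans_eq rfl
  -- termwise log bound
  have hterm : ∀ b : A, |φ (GGT.cons b (GGT.wcat k z x)) - φ (GGT.cons b (GGT.wcat k z y))|
      ≤ |u b - v b| / eps := by
    intro b
    rw [le_div_iff₀ heps]
    calc |φ (GGT.cons b (GGT.wcat k z x)) - φ (GGT.cons b (GGT.wcat k z y))| * eps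
        = eps * |φ (GGT.cons b (GGT.wcat k z x)) - φ (GGT.cons b (GGT.wcat k z y))| := by ring
      _ ≤ |u b - v b| := aux_abs_sub_le (hepsle _) (hepsle _)
  -- the real-valued bound
  have hreal : ∑ b : A, |φ (GGT.cons b (GGT.wcat k z x)) - φ (GGT.cons b (GGT.wcat k z y))|
      ≤ Real.sqrt C / eps / (k:ℝ) ^ ((1 + δ) / 2) := by
    have h1 : ∑ b : A, |φ (GGT.cons b (GGT.wcat k z x)) - φ (GGT.cons b (GGT.wcat k z y))|
        ≤ (∑ b : A, |u b - v b|) / eps := by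
      rw [Finset.sum_div]
      exact Finset.sum_le_sum fun b _ => hterm b
    have h2 : Real.sqrt S ≤ Real.sqrt T := Real.sqrt_le_sqrt hST
    have h3 : Real.sqrt T = Real.sqrt C / (k:ℝ) ^ ((1 + δ) / 2) := by
      rw [hTdef, Real.sqrt_div hC.le]
      congr 1
      rw [Real.sqrt_eq_rpow, ← Real.rpow_mul hk0.le, mul_comm]
      congr 1
      ring
    calc ∑ b : A, |φ (GGT.cons b (GGT.wcat k z x)) - φ (GGT.cons b (GGT.wcat k z y))|
        ≤ (∑ b : A, |u b - v b|) / eps := h1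
      _ ≤ Real.sqrt S / eps := by gcongr
      _ ≤ Real.sqrt T / eps := by gcongr
      _ = Real.sqrt C / eps / (k:ℝ) ^ ((1 + δ) / 2) := by
          rw [h3]; ring
  rw [tsum_fintype, ← ENNReal.ofReal_sum_of_nonneg (fun b _ => abs_nonneg _)]
  exact ENNReal.ofReal_le_ofReal hreal
end
end

section
/- For the Poisson autoregression potential with alphabet A = ℤ₊ and intensity λ(x_{-∞}^{-1}) = exp( Σ_{i=1}^∞ β_i (x_{-i} ∧ γ_i) ), the χ²-variation satisfies, for every k ≥ 1: χ²_k(φ) = sup_{a∈X} sup_{x,y∈X_-} ( exp( λ(a_{-k}^{-1} y) ( λ(a_{-k}^{-1} x)/λ(a_{-k}^{-1} y) − 1 )² ) − 1 ). -/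
open MeasureTheory ENNReal

noncomputable section

namespace GGT

/-- The Poisson autoregression intensity `λ(y) = exp(Σ_{i≥1} β_i (y_{-i} ∧ γ_i))`, where
`y : ℕ → ℕ` encodes the strict past (`y j` is the coordinate `-(j+1)`). -/
def poissonLam (β : ℕ → ℝ) (γ : ℕ → ℕ) (y : ℕ → ℕ) : ℝ :=
  Real.exp (∑' i : ℕ, β (i + 1) * (min (y i) (γ (i + 1)) : ℝ))

/-- The Poisson autoregression potential
`φ(x) = −λ(x_{-∞}^{-1}) + x₀ log λ(x_{-∞}^{-1}) − Σ_{k=0}^{x₀} log k`,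
so that `e^{φ(a x)}` is the Poisson(`λ(x)`) probability of `a`. -/
def poissonPhi (β : ℕ → ℝ) (γ : ℕ → ℕ) (x : ℕ → ℕ) : ℝ :=
  -poissonLam β γ (fun i => x (i + 1))
    + (x 0 : ℝ) * Real.log (poissonLam β γ (fun i => x (i + 1)))
    - ∑ k ∈ Finset.range (x 0 + 1), Real.log (k : ℝ)

end GGT

namespace PoissonAux

open Nat



/-- Poisson pmf. -/
def pmf (L : ℝ) (b : ℕ) : ℝ := Real.exp (-L) * L ^ b / (b ! : ℝ)

lemma pmf_pos {L : ℝ} (hL : 0 < L) (b : ℕ) : 0 < pmf L b := by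
  unfold pmf
  positivity

lemma tsum_pow_div_factorial (c : ℝ) : ∑' b : ℕ, c ^ b / (b ! : ℝ) = Real.exp c := by
  rw [Real.exp_eq_exp_ℝ, NormedSpace.exp_eq_tsum_div]

lemma summable_pmf (L : ℝ) : Summable (pmf L) := by
  have : pmf L = fun b => Real.exp (-L) * (L ^ b / (b ! : ℝ)) := by
    funext b; unfold pmf; ring
  rw [this]
  exact (Real.summable_pow_div_factorial L).mul_left _

lemma tsum_pmf (L : ℝ) : ∑' b : ℕ, pmf L b = 1 := by
  have : pmf L = fun b => Real.exp (-L) * (L ^ b / (b ! : ℝ)) := by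
    funext b; unfold pmf; ring
  rw [this, tsum_mul_left, tsum_pow_div_factorial, ← Real.exp_add]
  simp

lemma sum_log_factorial (n : ℕ) :
    ∑ k ∈ Finset.range (n + 1), Real.log (k : ℝ) = Real.log (n ! : ℝ) := by
  induction n with
  | zero => simp
  | succ n ih =>
    rw [Finset.sum_range_succ, ih, Nat.factorial_succ, Nat.cast_mul,
      Real.log_mul (by positivity) (by positivity)]
    ring

lemma chi_point (L1 L2 : ℝ) (h1 : 0 < L1) (h2 : 0 < L2) :
    ∑' b : ℕ, ENNReal.ofReal ((pmf L1 b - pmf L2 b) ^ 2 / pmf L2 b) =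
      ENNReal.ofReal (Real.exp (L2 * (L1 / L2 - 1) ^ 2) - 1) := by
  set q : ℕ → ℝ := fun b => (pmf L1 b - pmf L2 b) ^ 2 / pmf L2 b with hq
  set r : ℕ → ℝ := fun b => Real.exp (L2 - 2 * L1) * ((L1 ^ 2 / L2) ^ b / (b ! : ℝ)) with hr
  have hqnn : ∀ b, 0 ≤ q b := fun b => div_nonneg (sq_nonneg _) (pmf_pos h2 b).le
  have hkey : ∀ b, q b = r b - 2 * pmf L1 b + pmf L2 b := by
    intro b
    have hfb : (0:ℝ) < (b ! : ℝ) := by positivity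
    have he : Real.exp (L2 - 2 * L1) = Real.exp (-L1) ^ 2 / Real.exp (-L2) := by
      rw [sq, ← Real.exp_add, ← Real.exp_sub]; ring_nf
    simp only [hq, hr, pmf, he]
    have h1' : L1 ≠ 0 := h1.ne'
    have h2' : L2 ≠ 0 := h2.ne'
    have hpow : (L1 ^ 2 / L2) ^ b = L1 ^ b * L1 ^ b / L2 ^ b := by
      rw [div_pow, ← pow_mul, two_mul, pow_add]
    rw [hpow]
    field_simp
    ring
  have hsr : Summable r := (Real.summable_pow_div_factorial _).mul_left _
  have hs1 : Summable (pmf L1) := summable_pmf L1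
  have hs2 : Summable (pmf L2) := summable_pmf L2
  have hsq : Summable q := by
    have : q = fun b => r b - 2 * pmf L1 b + pmf L2 b := funext hkey
    rw [this]
    exact (hsr.sub (hs1.mul_left 2)).add hs2
  rw [show (∑' b : ℕ, ENNReal.ofReal ((pmf L1 b - pmf L2 b) ^ 2 / pmf L2 b))
      = ENNReal.ofReal (∑' b, q b) from (ENNReal.ofReal_tsum_of_nonneg hqnn hsq).symm]
  congr 1
  have : ∑' b, q b = (∑' b, r b) - 2 * (∑' b, pmf L1 b) + (∑' b, pmf L2 b) := by
    rw [show q = fun b => (r b - 2 * pmf L1 b) + pmf L2 b from funext hkey,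
      Summable.tsum_add (hsr.sub (hs1.mul_left 2)) hs2,
      Summable.tsum_sub hsr (hs1.mul_left 2), tsum_mul_left, tsum_mul_left]
  rw [this, tsum_pmf, tsum_pmf, hr, tsum_mul_left, tsum_pow_div_factorial, ← Real.exp_add]
  have : L2 - 2 * L1 + L1 ^ 2 / L2 = L2 * (L1 / L2 - 1) ^ 2 := by
    field_simp
    ring
  rw [this]
  ring

end PoissonAux

namespace PoissonAux
open Nat

open GGT in
lemma poissonLam_pos (β : ℕ → ℝ) (γ : ℕ → ℕ) (w : ℕ → ℕ) : 0 < poissonLam β γ w :=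
  Real.exp_pos _

open GGT in
lemma exp_poissonPhi (β : ℕ → ℝ) (γ : ℕ → ℕ) (b : ℕ) (w : ℕ → ℕ) :
    Real.exp (poissonPhi β γ (cons b w)) = pmf (poissonLam β γ w) b := by
  have hw : (fun i => cons b w (i + 1)) = w := rfl
  have h0 : cons b w 0 = b := rfl
  have hLpos : 0 < poissonLam β γ w := poissonLam_pos β γ w
  have hfb : (0:ℝ) < (b ! : ℝ) := by positivity
  unfold poissonPhi
  rw [hw, h0, sum_log_factorial, Real.exp_sub, Real.exp_add, Real.exp_nat_mul,
    Real.exp_log hLpos, Real.exp_log hfb]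
  rfl

end PoissonAux

/-- **Poisson autoregression: exact χ²-variation.** For every `k ≥ 1`,
`χ²_k(φ) = sup_{a,x,y} (exp(λ(a_{-k}^{-1}y) (λ(a_{-k}^{-1}x)/λ(a_{-k}^{-1}y) − 1)²) − 1)`. -/
theorem poisson_autoregression_chiSq_eq (β : ℕ → ℝ) (γ : ℕ → ℕ)
    (habs : Summable fun i : ℕ => |β (i + 1)|)
    (hS : Summable fun i : ℕ => |β (i + 1)| * (γ (i + 1) : ℝ)) :
    ∀ k : ℕ, 1 ≤ k →
      GGT.chiSq (GGT.poissonPhi β γ) k =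
        ⨆ (a : ℕ → ℕ) (x : ℕ → ℕ) (y : ℕ → ℕ),
          ENNReal.ofReal
            (Real.exp (GGT.poissonLam β γ (GGT.wcat k a y) *
                (GGT.poissonLam β γ (GGT.wcat k a x) / GGT.poissonLam β γ (GGT.wcat k a y)
                  - 1) ^ 2) - 1) := by
  intro k hk
  unfold GGT.chiSq
  refine iSup_congr fun z => iSup_congr fun x => iSup_congr fun y => ?_
  simp only [PoissonAux.exp_poissonPhi]
  exact PoissonAux.chi_point _ _ (PoissonAux.poissonLam_pos β γ _)
    (PoissonAux.poissonLam_pos β γ _)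
end
end
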